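/- arXiv:1312.5660 — 8 statements merged into one kernel-verified Lean document; each statement's English description precedes it below -/
import Mathlib

section
/- Let γ : [0,1] → ℝ be continuous, Γ(u) := ∫₀^u γ(v) dv, g := ∫₀¹ γ(v) dv, and assume condition (E1): Γ(u) − g·u > 0 for all u ∈ (0,1). If γ(0) > g > γ(1), then condition (E2) holds: ∫₀^{1/2} u/(Γ(u) − g·u) du + ∫_{1/2}^1 (1−u)/(Γ(u) − g·u) du < +∞. -/
open MeasureTheory Set Filter Topology

/-- `Γ(u) = ∫₀^u γ(v) dv`. -/
noncomputable def Gam (γ : ℝ → ℝ) (u : ℝ) : ℝ := ∫ v in (0:ℝ)..u, γ v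

/-- market mean growth rate `g = ∫₀¹ γ(v) dv`. -/
noncomputable def mg (γ : ℝ → ℝ) : ℝ := ∫ v in (0:ℝ)..1, γ v

/-- `Ψ(u) = ∫_{1/2}^u σ²(v) / (2 (Γ(v) - g v)) dv`. -/
noncomputable def Psi (γ σ2 : ℝ → ℝ) (u : ℝ) : ℝ :=
  ∫ v in (1/2:ℝ)..u, σ2 v / (2 * (Gam γ v - mg γ * v))

/-- critical diversity index `p_c = 2 (g - γ(1)) / σ²(1)`. -/
noncomputable def pcrit (γ σ2 : ℝ → ℝ) : ℝ := 2 * (mg γ - γ 1) / σ2 1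

/-- critical index `q_c = 2 (γ(0) - g) / σ²(0)`. -/
noncomputable def qcrit (γ σ2 : ℝ → ℝ) : ℝ := 2 * (γ 0 - mg γ) / σ2 0

/-!
`D(u) = Γ(u) - g u` vanishes at `0` and at `1`, where its one-sided derivatives are
`γ(0) - g ≠ 0` and `γ(1) - g ≠ 0`. Hence `u / D(u)` and `(1 - u) / D(u)` are reciprocals of
difference quotients of `D` and have finite limits at these endpoints. Since `D > 0` on `(0, 1)`
by (E1), both integrands extend continuously to the closed intervals and are integrable.
-/

section IntegrableOnIoo

variable {E : Type*} [NormedAddCommGroup E] {f : ℝ → E} {a b : ℝ}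

theorem ContinuousOn.integrableOn_Ioo_of_tendsto {la lb : E} (hf : ContinuousOn f (Ioo a b))
    (ha : Tendsto f (𝓝[>] a) (𝓝 la)) (hb : Tendsto f (𝓝[<] b) (𝓝 lb)) :
    IntegrableOn f (Ioo a b) :=
  ((continuousOn_Icc_extendFrom_Ioo hf ha hb).integrableOn_Icc.mono_set
    Ioo_subset_Icc_self).congr_fun (extendFrom_extends hf) measurableSet_Ioo

theorem ContinuousOn.integrableOn_Ioo_of_tendsto_nhdsGT {l : E} {c : ℝ}
    (hf : ContinuousOn f (Ioo a b)) (ha : Tendsto f (𝓝[>] a) (𝓝 l)) (hc : c ∈ Ioo a b) :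
    IntegrableOn f (Ioo a c) :=
  (hf.mono (Ioo_subset_Ioo_right hc.2.le)).integrableOn_Ioo_of_tendsto ha
    ((hf.continuousAt (Ioo_mem_nhds hc.1 hc.2)).tendsto.mono_left nhdsWithin_le_nhds)

theorem ContinuousOn.integrableOn_Ioo_of_tendsto_nhdsLT {l : E} {c : ℝ}
    (hf : ContinuousOn f (Ioo a b)) (hb : Tendsto f (𝓝[<] b) (𝓝 l)) (hc : c ∈ Ioo a b) :
    IntegrableOn f (Ioo c b) :=
  (hf.mono (Ioo_subset_Ioo_left hc.1.le)).integrableOn_Ioo_of_tendsto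
    ((hf.continuousAt (Ioo_mem_nhds hc.1 hc.2)).tendsto.mono_left nhdsWithin_le_nhds) hb

end IntegrableOnIoo

theorem HasDerivWithinAt.tendsto_sub_div_of_eq_zero {𝕜 : Type*} [NontriviallyNormedField 𝕜]
    {D : 𝕜 → 𝕜} {d a : 𝕜} {s : Set 𝕜} (hD : HasDerivWithinAt D d s a) (hDa : D a = 0)
    (hd : d ≠ 0) : Tendsto (fun u => (u - a) / D u) (𝓝[s \ {a}] a) (𝓝 d⁻¹) :=
  ((hasDerivWithinAt_iff_tendsto_slope.1 hD).inv₀ hd).congr fun u => by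
    simp [slope_def_field, hDa]

section Growth

variable {γ : ℝ → ℝ} {a b x : ℝ}

theorem hasDerivWithinAt_Gam (hγ : ContinuousOn γ (Icc a b)) (h0 : 0 ∈ Icc a b)
    (hx : x ∈ Icc a b) : HasDerivWithinAt (Gam γ) (γ x) (Icc a b) x :=
  have : Fact (x ∈ Icc a b) := ⟨hx⟩
  intervalIntegral.integral_hasDerivWithinAt_right
    (hγ.mono (uIcc_subset_Icc h0 hx)).intervalIntegrable
    (hγ.stronglyMeasurableAtFilter_nhdsWithin measurableSet_Icc x) (hγ x hx)

theorem hasDerivWithinAt_Gam_sub_mg_mul (hγ : ContinuousOn γ (Icc 0 1)) (hx : x ∈ Icc 0 1) :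
    HasDerivWithinAt (fun u => Gam γ u - mg γ * u) (γ x - mg γ) (Icc 0 1) x := by
  simpa using (hasDerivWithinAt_Gam hγ (left_mem_Icc.2 zero_le_one) hx).fun_sub
    ((hasDerivWithinAt_id x _).const_mul (mg γ))

theorem tendsto_div_Gam_sub_mg_mul_nhdsGT_zero (hγ : ContinuousOn γ (Icc 0 1))
    (h0 : γ 0 ≠ mg γ) :
    Tendsto (fun u => u / (Gam γ u - mg γ * u)) (𝓝[>] 0) (𝓝 (γ 0 - mg γ)⁻¹) := by
  have hD := (hasDerivWithinAt_Gam_sub_mg_mul hγ (left_mem_Icc.2 zero_le_one))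
    |>.mono_of_mem_nhdsWithin (Icc_mem_nhdsGE zero_lt_one)
  simpa using hD.tendsto_sub_div_of_eq_zero (by simp [Gam]) (sub_ne_zero.2 h0)

theorem tendsto_one_sub_div_Gam_sub_mg_mul_nhdsLT_one (hγ : ContinuousOn γ (Icc 0 1))
    (h1 : γ 1 ≠ mg γ) :
    Tendsto (fun u => (1 - u) / (Gam γ u - mg γ * u)) (𝓝[<] 1) (𝓝 (mg γ - γ 1)⁻¹) := by
  have hD := (hasDerivWithinAt_Gam_sub_mg_mul hγ (right_mem_Icc.2 zero_le_one))
    |>.mono_of_mem_nhdsWithin (Icc_mem_nhdsLE zero_lt_one)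
  have := (hD.tendsto_sub_div_of_eq_zero (by simp [Gam, mg]) (sub_ne_zero.2 h1)).neg
  simpa [← neg_div, neg_inv] using this

end Growth

/-- under (E1), if γ(0) > g > γ(1) then (E2) holds, i.e. both integrals
∫₀^{1/2} u/(Γ(u) - g u) du and ∫_{1/2}^1 (1-u)/(Γ(u) - g u) du are finite. -/
theorem stmt2 (γ : ℝ → ℝ) (hγc : ContinuousOn γ (Set.Icc 0 1))
    (hE1 : ∀ u ∈ Set.Ioo (0:ℝ) 1, 0 < Gam γ u - mg γ * u)
    (h0 : γ 0 > mg γ) (h1 : mg γ > γ 1) :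
    IntegrableOn (fun u => u / (Gam γ u - mg γ * u)) (Set.Ioo 0 (1/2)) ∧
      IntegrableOn (fun u => (1 - u) / (Gam γ u - mg γ * u)) (Set.Ioo (1/2) 1) := by
  have hD : ContinuousOn (fun u => Gam γ u - mg γ * u) (Ioo 0 1) := fun x hx =>
    (hasDerivWithinAt_Gam_sub_mg_mul hγc (Ioo_subset_Icc_self hx)).continuousWithinAt.mono
      Ioo_subset_Icc_self
  have hD_ne : ∀ u ∈ Ioo (0:ℝ) 1, Gam γ u - mg γ * u ≠ 0 := fun u hu => (hE1 u hu).ne'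
  have hhalf : (1/2 : ℝ) ∈ Ioo 0 1 := by norm_num
  exact ⟨(continuousOn_id.div hD hD_ne).integrableOn_Ioo_of_tendsto_nhdsGT
      (tendsto_div_Gam_sub_mg_mul_nhdsGT_zero hγc h0.ne') hhalf,
    ((continuousOn_const.sub continuousOn_id).div hD hD_ne).integrableOn_Ioo_of_tendsto_nhdsLT
      (tendsto_one_sub_div_Gam_sub_mg_mul_nhdsLT_one hγc h1.ne) hhalf⟩
end

section
/- Let γ, σ² : [0,1] → ℝ be continuous with σ²(u) > 0 for all u ∈ [0,1] (condition (UE)), let Γ(u) := ∫₀^u γ(v) dv, g := ∫₀¹ γ(v) dv, and assume (E1): Γ(u) − g·u > 0 for all u ∈ (0,1). Define Ψ(u) := ∫_{1/2}^u σ²(v)/(2(Γ(v) − g·v)) dv for u ∈ (0,1). Then Ψ is continuously differentiable on (0,1) with Ψ'(u) = σ²(u)/(2(Γ(u) − g·u)) > 0, Ψ(u) → −∞ as u → 0⁺, and Ψ(u) → +∞ as u → 1⁻; in particular Ψ is a strictly increasing bijection from (0,1) onto ℝ. -/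
open MeasureTheory Set Filter Topology

/-- under (UE) and (E1), Ψ is C¹ on (0,1) with positive derivative
σ²(u)/(2(Γ(u)-gu)), tends to -∞ at 0⁺ and +∞ at 1⁻, and is a strictly increasing
bijection from (0,1) onto ℝ. -/
theorem stmt3 (γ σ2 : ℝ → ℝ) (hγc : ContinuousOn γ (Set.Icc 0 1))
    (hσc : ContinuousOn σ2 (Set.Icc 0 1)) (hUE : ∀ u ∈ Set.Icc (0:ℝ) 1, 0 < σ2 u)
    (hE1 : ∀ u ∈ Set.Ioo (0:ℝ) 1, 0 < Gam γ u - mg γ * u) :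
    (∀ u ∈ Set.Ioo (0:ℝ) 1,
        HasDerivAt (Psi γ σ2) (σ2 u / (2 * (Gam γ u - mg γ * u))) u ∧
          0 < σ2 u / (2 * (Gam γ u - mg γ * u))) ∧
      ContinuousOn (fun u => σ2 u / (2 * (Gam γ u - mg γ * u))) (Set.Ioo 0 1) ∧
      Filter.Tendsto (Psi γ σ2) (nhdsWithin 0 (Set.Ioi 0)) Filter.atBot ∧
      Filter.Tendsto (Psi γ σ2) (nhdsWithin 1 (Set.Iio 1)) Filter.atTop ∧
      StrictMonoOn (Psi γ σ2) (Set.Ioo 0 1) ∧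
      Set.BijOn (Psi γ σ2) (Set.Ioo 0 1) Set.univ := by
  have hIoo : Set.Ioo (0:ℝ) 1 ⊆ Set.Icc 0 1 := Set.Ioo_subset_Icc_self
  set g : ℝ := mg γ with hg
  set F : ℝ → ℝ := fun u => σ2 u / (2 * (Gam γ u - g * u)) with hF
  -- continuity of γ - g and interval integrability on subintervals of [0,1]
  have hγg : ContinuousOn (fun x => γ x - g) (Set.Icc 0 1) := hγc.sub continuousOn_const
  have hint : ∀ a b : ℝ, Set.uIcc a b ⊆ Set.Icc 0 1 →
      IntervalIntegrable (fun x => γ x - g) volume a b :=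
    fun a b h => (hγg.mono h).intervalIntegrable
  have hγint : ∀ a b : ℝ, Set.uIcc a b ⊆ Set.Icc 0 1 → IntervalIntegrable γ volume a b :=
    fun a b h => (hγc.mono h).intervalIntegrable
  have hsub01 : ∀ v : ℝ, v ∈ Set.Icc (0:ℝ) 1 → Set.uIcc (0:ℝ) v ⊆ Set.Icc 0 1 := by
    intro v hv
    rw [Set.uIcc_of_le hv.1]
    exact Set.Icc_subset_Icc le_rfl hv.2
  have hsub01' : ∀ v : ℝ, v ∈ Set.Icc (0:ℝ) 1 → Set.uIcc v (1:ℝ) ⊆ Set.Icc 0 1 := by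
    intro v hv
    rw [Set.uIcc_of_le hv.2]
    exact Set.Icc_subset_Icc hv.1 le_rfl
  -- Γ(v) - g v as a single integral
  have hGam : ∀ v ∈ Set.Icc (0:ℝ) 1,
      Gam γ v - g * v = ∫ x in (0:ℝ)..v, (γ x - g) := by
    intro v hv
    rw [intervalIntegral.integral_sub (hγint 0 v (hsub01 v hv)) intervalIntegrable_const,
      intervalIntegral.integral_const]
    simp [Gam]
    ring
  have htot : (∫ x in (0:ℝ)..1, (γ x - g)) = 0 := by
    rw [intervalIntegral.integral_sub (hγint 0 1 (by norm_num)) intervalIntegrable_const,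
      intervalIntegral.integral_const]
    simp [hg, mg]
  -- global bound M on |γ - g|
  obtain ⟨C, hC⟩ := isCompact_Icc.exists_bound_of_continuousOn hγg
  set M : ℝ := C + 1 with hM
  have hM0 : 0 < M := by
    have := hC 0 (by constructor <;> norm_num)
    have := norm_nonneg (γ 0 - g)
    simp only [hM]; linarith
  have hMb : ∀ x ∈ Set.Icc (0:ℝ) 1, ‖γ x - g‖ ≤ M := fun x hx => (hC x hx).trans (by linarith)
  -- upper bounds on the denominator
  have hub1 : ∀ v ∈ Set.Icc (0:ℝ) 1, Gam γ v - g * v ≤ M * v := by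
    intro v hv
    rw [hGam v hv]
    have hb := intervalIntegral.norm_integral_le_of_norm_le_const (C := M)
      (f := fun x => γ x - g) (a := 0) (b := v)
      (fun x hx => hMb x (Set.uIoc_subset_uIcc.trans (hsub01 v hv) hx))
    have hb' : |∫ x in (0:ℝ)..v, (γ x - g)| ≤ M * |v - 0| := hb
    calc (∫ x in (0:ℝ)..v, (γ x - g)) ≤ |∫ x in (0:ℝ)..v, (γ x - g)| := le_abs_self _
      _ ≤ M * |v - 0| := hb'
      _ = M * v := by rw [sub_zero, abs_of_nonneg hv.1]
  have hub2 : ∀ v ∈ Set.Icc (0:ℝ) 1, Gam γ v - g * v ≤ M * (1 - v) := by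
    intro v hv
    have hadd : (∫ x in (0:ℝ)..v, (γ x - g)) + ∫ x in v..(1:ℝ), (γ x - g)
        = ∫ x in (0:ℝ)..1, (γ x - g) :=
      intervalIntegral.integral_add_adjacent_intervals (hint 0 v (hsub01 v hv))
        (hint v 1 (hsub01' v hv))
    have hval : Gam γ v - g * v = -∫ x in v..(1:ℝ), (γ x - g) := by
      rw [hGam v hv]; rw [htot] at hadd; linarith
    rw [hval]
    have hb := intervalIntegral.norm_integral_le_of_norm_le_const (C := M)
      (f := fun x => γ x - g) (a := v) (b := 1)
      (fun x hx => hMb x (Set.uIoc_subset_uIcc.trans (hsub01' v hv) hx))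
    have habs : |∫ x in v..(1:ℝ), (γ x - g)| ≤ M * |1 - v| := hb
    rw [abs_of_nonneg (by linarith [hv.2] : (0:ℝ) ≤ 1 - v)] at habs
    calc -∫ x in v..(1:ℝ), (γ x - g) ≤ |∫ x in v..(1:ℝ), (γ x - g)| := neg_le_abs _
      _ ≤ M * (1 - v) := habs
  -- positive lower bound ε for σ²
  obtain ⟨v₀, hv₀, hmin⟩ := isCompact_Icc.exists_isMinOn
    (Set.nonempty_Icc.mpr (by norm_num : (0:ℝ) ≤ 1)) hσc
  set ε : ℝ := σ2 v₀ with hε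
  have hε0 : 0 < ε := hUE v₀ hv₀
  have hεb : ∀ v ∈ Set.Icc (0:ℝ) 1, ε ≤ σ2 v := fun v hv => hmin hv
  set c : ℝ := ε / (2 * M) with hc
  have hc0 : 0 < c := by positivity
  -- positivity of denominator and of F
  have hden : ∀ u ∈ Set.Ioo (0:ℝ) 1, 0 < 2 * (Gam γ u - g * u) := by
    intro u hu; have := hE1 u hu; linarith
  have hFpos : ∀ u ∈ Set.Ioo (0:ℝ) 1, 0 < F u := by
    intro u hu
    exact div_pos (hUE u (hIoo hu)) (hden u hu)
  -- lower bounds for F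
  have hFlow : ∀ v ∈ Set.Ioo (0:ℝ) 1, c / v ≤ F v := by
    intro v hv
    have h1 : c / v = ε / (2 * M * v) := by rw [hc, div_div]
    rw [h1, hF]
    apply div_le_div₀ (le_of_lt (hUE v (hIoo hv))) (hεb v (hIoo hv)) (hden v hv)
    have := hub1 v (hIoo hv)
    nlinarith
  have hFhigh : ∀ v ∈ Set.Ioo (0:ℝ) 1, c / (1 - v) ≤ F v := by
    intro v hv
    have h1 : c / (1 - v) = ε / (2 * M * (1 - v)) := by rw [hc, div_div]
    rw [h1, hF]
    apply div_le_div₀ (le_of_lt (hUE v (hIoo hv))) (hεb v (hIoo hv)) (hden v hv)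
    have := hub2 v (hIoo hv)
    nlinarith
  -- continuity of F on (0,1)
  have hGamCont : ContinuousOn (Gam γ) (Set.Icc 0 1) := by
    have : Set.uIcc (0:ℝ) 1 = Set.Icc 0 1 := Set.uIcc_of_le (by norm_num)
    have h := intervalIntegral.continuousOn_primitive_interval
      (f := γ) (a := (0:ℝ)) (b := 1) (μ := volume)
      (by rw [this]; exact hγc.integrableOn_compact isCompact_Icc)
    rw [this] at h
    exact h
  have hFcont : ContinuousOn F (Set.Ioo 0 1) := by
    apply ContinuousOn.div (hσc.mono hIoo)
    · exact continuousOn_const.mul (((hGamCont.mono hIoo).sub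
        (continuousOn_const.mul continuousOn_id)))
    · intro u hu; exact ne_of_gt (hden u hu)
  have hFint : ∀ a b : ℝ, Set.uIcc a b ⊆ Set.Ioo 0 1 → IntervalIntegrable F volume a b :=
    fun a b h => (hFcont.mono h).intervalIntegrable
  have hhalf : (1/2 : ℝ) ∈ Set.Ioo (0:ℝ) 1 := by norm_num
  -- FTC: derivative of Ψ
  have hPsiDeriv : ∀ u ∈ Set.Ioo (0:ℝ) 1, HasDerivAt (Psi γ σ2) (F u) u := by
    intro u hu
    have hsub : Set.uIcc (1/2:ℝ) u ⊆ Set.Ioo 0 1 :=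
      Set.ordConnected_Ioo.uIcc_subset hhalf hu
    have h := intervalIntegral.integral_hasDerivAt_right (hFint _ _ hsub)
      (ContinuousOn.stronglyMeasurableAtFilter isOpen_Ioo hFcont u hu)
      (hFcont.continuousAt (isOpen_Ioo.mem_nhds hu))
    exact h
  have hPsiC : ContinuousOn (Psi γ σ2) (Set.Ioo 0 1) :=
    fun u hu => ((hPsiDeriv u hu).continuousAt).continuousWithinAt
  -- strict monotonicity
  have hmonoPsi : StrictMonoOn (Psi γ σ2) (Set.Ioo 0 1) := by
    apply strictMonoOn_of_deriv_pos (convex_Ioo 0 1) hPsiC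
    intro x hx
    rw [interior_Ioo] at hx
    rw [(hPsiDeriv x hx).deriv]
    exact hFpos x hx
  -- bound near 0
  have hbound0 : ∀ u ∈ Set.Ioc (0:ℝ) (1/2),
      Psi γ σ2 u ≤ c * Real.log u - c * Real.log (1/2) := by
    intro u hu
    have hsub : Set.Icc u (1/2:ℝ) ⊆ Set.Ioo 0 1 := fun v hv =>
      ⟨lt_of_lt_of_le hu.1 hv.1, lt_of_le_of_lt hv.2 (by norm_num)⟩
    have huI : Set.uIcc u (1/2:ℝ) = Set.Icc u (1/2) := Set.uIcc_of_le hu.2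
    have hFi : IntervalIntegrable F volume u (1/2) := hFint _ _ (huI ▸ hsub)
    have hgi : IntervalIntegrable (fun v => c / v) volume u (1/2) := by
      apply ContinuousOn.intervalIntegrable
      rw [huI]
      exact continuousOn_const.div continuousOn_id
        (fun v hv => ne_of_gt (lt_of_lt_of_le hu.1 hv.1))
    have hm : (∫ v in u..(1/2:ℝ), c / v) ≤ ∫ v in u..(1/2:ℝ), F v :=
      intervalIntegral.integral_mono_on hu.2 hgi hFi (fun v hv => hFlow v (hsub hv))
    have hcomp : (∫ v in u..(1/2:ℝ), c / v) = c * (Real.log (1/2) - Real.log u) := by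
      have h0 : (0:ℝ) ∉ Set.uIcc u (1/2) := by
        rw [huI]; intro h; exact absurd h.1 (not_le.mpr hu.1)
      have hfun : (fun v : ℝ => c / v) = fun v : ℝ => c * v⁻¹ :=
        funext fun v => div_eq_mul_inv c v
      rw [hfun, intervalIntegral.integral_const_mul, integral_inv h0,
        Real.log_div (by norm_num) (ne_of_gt hu.1)]
    have hPsiEq : Psi γ σ2 u = -∫ v in u..(1/2:ℝ), F v := by
      rw [Psi, intervalIntegral.integral_symm]
    rw [hPsiEq]
    rw [hcomp] at hm
    linarith
  -- bound near 1
  have hbound1 : ∀ u ∈ Set.Ico (1/2:ℝ) 1,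
      c * (Real.log (1/2) - Real.log (1 - u)) ≤ Psi γ σ2 u := by
    intro u hu
    have hsub : Set.Icc (1/2:ℝ) u ⊆ Set.Ioo 0 1 := fun v hv =>
      ⟨lt_of_lt_of_le (by norm_num) hv.1, lt_of_le_of_lt hv.2 hu.2⟩
    have huI : Set.uIcc (1/2:ℝ) u = Set.Icc (1/2) u := Set.uIcc_of_le hu.1
    have hFi : IntervalIntegrable F volume (1/2) u := hFint _ _ (huI ▸ hsub)
    have hgi : IntervalIntegrable (fun v => c / (1 - v)) volume (1/2) u := by
      apply ContinuousOn.intervalIntegrable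
      rw [huI]
      exact continuousOn_const.div (continuousOn_const.sub continuousOn_id)
        (fun v hv => ne_of_gt (by linarith [hv.2, hu.2] : (0:ℝ) < 1 - v))
    have hm : (∫ v in (1/2:ℝ)..u, c / (1 - v)) ≤ ∫ v in (1/2:ℝ)..u, F v :=
      intervalIntegral.integral_mono_on hu.1 hgi hFi (fun v hv => hFhigh v (hsub hv))
    have hcomp : (∫ v in (1/2:ℝ)..u, c / (1 - v))
        = c * (Real.log (1/2) - Real.log (1 - u)) := by
      have hfun : (fun v : ℝ => c / (1 - v)) = fun v : ℝ => c * (1 - v)⁻¹ :=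
        funext fun v => div_eq_mul_inv c (1 - v)
      rw [hfun, intervalIntegral.integral_const_mul]
      have h1 : (∫ v in (1/2:ℝ)..u, (1 - v)⁻¹)
          = ∫ x in (1 - u)..(1 - (1/2:ℝ)), x⁻¹ :=
        intervalIntegral.integral_comp_sub_left (fun x => x⁻¹) 1
      have h0 : (0:ℝ) ∉ Set.uIcc (1 - u) (1 - (1/2:ℝ)) := by
        rw [Set.uIcc_of_le (by linarith [hu.1] : 1 - u ≤ 1 - (1/2:ℝ))]
        intro h
        exact absurd h.1 (not_le.mpr (by linarith [hu.2]))
      rw [h1, integral_inv h0,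
        Real.log_div (by norm_num) (ne_of_gt (by linarith [hu.2] : (0:ℝ) < 1 - u))]
      norm_num
    have hPsiEq : Psi γ σ2 u = ∫ v in (1/2:ℝ)..u, F v := rfl
    rw [hPsiEq, ← hcomp] at *
    exact hm
  -- tendsto atBot at 0⁺
  have hT0 : Tendsto (Psi γ σ2) (𝓝[>] (0:ℝ)) atBot := by
    have hlogB : Tendsto (fun u : ℝ => c * Real.log u) (𝓝[>] (0:ℝ)) atBot :=
      Real.tendsto_log_nhdsGT_zero.const_mul_atBot hc0
    have hg' : Tendsto (fun u : ℝ => c * Real.log u - c * Real.log (1/2))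
        (𝓝[>] (0:ℝ)) atBot := by
      simpa [sub_eq_add_neg] using
        tendsto_atBot_add_const_right (𝓝[>] (0:ℝ)) (-(c * Real.log (1/2))) hlogB
    apply tendsto_atBot_mono' _ _ hg'
    filter_upwards [Ioc_mem_nhdsGT_of_mem
      (show (0:ℝ) ∈ Set.Ico (0:ℝ) (1/2) by norm_num)] with u hu
    exact hbound0 u hu
  -- tendsto atTop at 1⁻
  have hT1 : Tendsto (Psi γ σ2) (𝓝[<] (1:ℝ)) atTop := by
    have h1u : Tendsto (fun u : ℝ => 1 - u) (𝓝[<] (1:ℝ)) (𝓝[>] (0:ℝ)) := by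
      apply tendsto_nhdsWithin_of_tendsto_nhds_of_eventually_within
      · have : Tendsto (fun u : ℝ => 1 - u) (𝓝 (1:ℝ)) (𝓝 (1 - 1 : ℝ)) :=
          (continuous_const.sub continuous_id).tendsto 1
        simpa using this.mono_left nhdsWithin_le_nhds
      · filter_upwards [self_mem_nhdsWithin] with u hu
        simp only [Set.mem_Ioi]
        have := Set.mem_Iio.mp hu
        linarith
    have hlog1 : Tendsto (fun u : ℝ => Real.log (1 - u)) (𝓝[<] (1:ℝ)) atBot :=
      Real.tendsto_log_nhdsGT_zero.comp h1u
    have hneg : Tendsto (fun u : ℝ => Real.log (1/2) - Real.log (1 - u))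
        (𝓝[<] (1:ℝ)) atTop := by
      have hn : Tendsto (fun u : ℝ => -Real.log (1 - u)) (𝓝[<] (1:ℝ)) atTop :=
        tendsto_neg_atBot_atTop.comp hlog1
      simpa [sub_eq_add_neg] using
        tendsto_atTop_add_const_left (𝓝[<] (1:ℝ)) (Real.log (1/2)) hn
    have hg' : Tendsto (fun u : ℝ => c * (Real.log (1/2) - Real.log (1 - u)))
        (𝓝[<] (1:ℝ)) atTop := hneg.const_mul_atTop hc0
    apply tendsto_atTop_mono' _ _ hg'
    filter_upwards [Ico_mem_nhdsLT_of_mem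
      (show (1:ℝ) ∈ Set.Ioc (1/2:ℝ) 1 by norm_num)] with u hu
    exact hbound1 u hu
  -- bijectivity
  have hbij : Set.BijOn (Psi γ σ2) (Set.Ioo 0 1) Set.univ := by
    refine ⟨Set.mapsTo_univ _ _, hmonoPsi.injOn, ?_⟩
    intro y _
    have h1 : ∀ᶠ u in 𝓝[>] (0:ℝ), Psi γ σ2 u < y := hT0.eventually (eventually_lt_atBot y)
    have h2 : ∀ᶠ u in 𝓝[<] (1:ℝ), y < Psi γ σ2 u := hT1.eventually (eventually_gt_atTop y)
    have hm1 : ∀ᶠ u in 𝓝[>] (0:ℝ), u ∈ Set.Ioc (0:ℝ) (1/2) := eventually_mem_set.mpr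
      (Ioc_mem_nhdsGT_of_mem (show (0:ℝ) ∈ Set.Ico (0:ℝ) (1/2) by norm_num))
    have hm2 : ∀ᶠ u in 𝓝[<] (1:ℝ), u ∈ Set.Ico (1/2:ℝ) 1 := eventually_mem_set.mpr
      (Ico_mem_nhdsLT_of_mem (show (1:ℝ) ∈ Set.Ioc (1/2:ℝ) 1 by norm_num))
    obtain ⟨a, hay, ha⟩ := (h1.and hm1).exists
    obtain ⟨b, hby, hb⟩ := (h2.and hm2).exists
    have hab : a ≤ b := ha.2.trans hb.1
    have hIcc : Set.Icc a b ⊆ Set.Ioo 0 1 := fun x hx =>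
      ⟨lt_of_lt_of_le ha.1 hx.1, lt_of_le_of_lt hx.2 hb.2⟩
    obtain ⟨x, hx, hxy⟩ := intermediate_value_Icc hab (hPsiC.mono hIcc)
      ⟨le_of_lt hay, le_of_lt hby⟩
    exact ⟨x, hIcc hx, hxy⟩
  exact ⟨fun u hu => ⟨hPsiDeriv u hu, hFpos u hu⟩, hFcont, hT0, hT1, hmonoPsi, hbij⟩
end

section
/- Let γ, σ² : [0,1] → ℝ be continuous with σ²(u) > 0 for all u ∈ [0,1] (condition (UE)), let Γ(u) := ∫₀^u γ(v) dv, g := ∫₀¹ γ(v) dv, assume (E1): Γ(u) − g·u > 0 for all u ∈ (0,1), and let Ψ(u) := ∫_{1/2}^u σ²(v)/(2(Γ(v) − g·v)) dv. Then Ψ is integrable on (0,1) if and only if condition (E2) holds, i.e. if and only if ∫₀^{1/2} u/(Γ(u) − g·u) du + ∫_{1/2}^1 (1−u)/(Γ(u) − g·u) du < +∞; and in that case ∫₀¹ Ψ(u) du = −∫₀^{1/2} u·σ²(u)/(2(Γ(u) − g·u)) du + ∫_{1/2}^1 (1−u)·σ²(u)/(2(Γ(u) − g·u)) du. -/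
open MeasureTheory Set Filter Topology

open scoped ENNReal

-- Both sides are the measure of the triangle `{a < v ≤ u < b}`, sliced along `u` or along `v`.
lemma lintegral_Ioo_measure_Ioc_left (ν : Measure ℝ) [SFinite ν] (a b : ℝ) :
    ∫⁻ u in Ioo a b, ν (Ioc a u) = ∫⁻ v in Ioo a b, ENNReal.ofReal (b - v) ∂ν := by
  have hT : MeasurableSet {p : ℝ × ℝ | a < p.2 ∧ p.2 ≤ p.1} :=
    (measurableSet_lt measurable_const measurable_snd).inter
      (measurableSet_le measurable_snd measurable_fst)
  rw [show ∫⁻ u in Ioo a b, ν (Ioc a u) = ((volume.restrict (Ioo a b)).prod ν) _ from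
    (Measure.prod_apply hT).symm, Measure.prod_apply_symm hT,
    ← lintegral_indicator measurableSet_Ioo]
  refine lintegral_congr fun v => ?_
  rw [Measure.restrict_apply' measurableSet_Ioo]
  by_cases hv : v ∈ Ioo a b
  · have : (fun u => (u, v)) ⁻¹' {p : ℝ × ℝ | a < p.2 ∧ p.2 ≤ p.1} ∩ Ioo a b = Ico v b := by
      ext u
      simp only [mem_inter_iff, mem_preimage, mem_ofPred_eq, mem_Ioo, mem_Ico]
      constructor
      · rintro ⟨⟨-, hvu⟩, -, hub⟩; exact ⟨hvu, hub⟩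
      · rintro ⟨hvu, hub⟩; exact ⟨⟨hv.1, hvu⟩, hv.1.trans_le hvu, hub⟩
    rw [this, Real.volume_Ico, indicator_of_mem hv]
  · have : (fun u => (u, v)) ⁻¹' {p : ℝ × ℝ | a < p.2 ∧ p.2 ≤ p.1} ∩ Ioo a b = ∅ := by
      ext u
      simp only [mem_inter_iff, mem_preimage, mem_ofPred_eq, mem_Ioo, mem_empty_iff_false,
        iff_false]
      rintro ⟨⟨hav, hvu⟩, -, hub⟩; exact hv ⟨hav, hvu.trans_lt hub⟩
    rw [this, measure_empty, indicator_of_notMem hv]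

lemma lintegral_Ioo_measure_Ioc_right (ν : Measure ℝ) [SFinite ν] (a b : ℝ) :
    ∫⁻ u in Ioo a b, ν (Ioc u b) = ∫⁻ v in Ioc a b, ENNReal.ofReal (v - a) ∂ν := by
  have hT : MeasurableSet {p : ℝ × ℝ | p.1 < p.2 ∧ p.2 ≤ b} :=
    (measurableSet_lt measurable_fst measurable_snd).inter
      (measurableSet_le measurable_snd measurable_const)
  rw [show ∫⁻ u in Ioo a b, ν (Ioc u b) = ((volume.restrict (Ioo a b)).prod ν) _ from
    (Measure.prod_apply hT).symm, Measure.prod_apply_symm hT,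
    ← lintegral_indicator measurableSet_Ioc]
  refine lintegral_congr fun v => ?_
  rw [Measure.restrict_apply' measurableSet_Ioo]
  by_cases hv : v ≤ b
  · have : (fun u => (u, v)) ⁻¹' {p : ℝ × ℝ | p.1 < p.2 ∧ p.2 ≤ b} ∩ Ioo a b = Ioo a v := by
      ext u
      simp only [mem_inter_iff, mem_preimage, mem_ofPred_eq, mem_Ioo]
      constructor
      · rintro ⟨⟨huv, -⟩, hau, -⟩; exact ⟨hau, huv⟩
      · rintro ⟨hau, huv⟩; exact ⟨⟨huv, hv⟩, hau, huv.trans_le hv⟩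
    rw [this, Real.volume_Ioo]
    by_cases hav : a < v
    · rw [indicator_of_mem (show v ∈ Ioc a b from ⟨hav, hv⟩)]
    · rw [indicator_of_notMem fun h => hav h.1, ENNReal.ofReal_eq_zero.2 (by linarith)]
  · have : (fun u => (u, v)) ⁻¹' {p : ℝ × ℝ | p.1 < p.2 ∧ p.2 ≤ b} ∩ Ioo a b = ∅ := by
      ext u
      simp only [mem_inter_iff, mem_preimage, mem_ofPred_eq, mem_Ioo, mem_empty_iff_false,
        iff_false]
      rintro ⟨⟨-, hvb⟩, -⟩; exact hv hvb
    rw [this, measure_empty, indicator_of_notMem fun h => hv h.2]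

lemma lintegral_Ioo_setLIntegral_Ioc_left {f : ℝ → ℝ≥0∞} {a b : ℝ}
    (hf : AEMeasurable f (volume.restrict (Ioo a b))) :
    ∫⁻ u in Ioo a b, ∫⁻ v in Ioc a u, f v = ∫⁻ v in Ioo a b, f v * ENNReal.ofReal (b - v) := by
  simp_rw [← withDensity_apply f measurableSet_Ioc]
  rw [lintegral_Ioo_measure_Ioc_left, restrict_withDensity measurableSet_Ioo,
    lintegral_withDensity_eq_lintegral_mul₀ hf (by fun_prop)]
  rfl

lemma lintegral_Ioo_setLIntegral_Ioc_right {f : ℝ → ℝ≥0∞} {a b : ℝ}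
    (hf : AEMeasurable f (volume.restrict (Ioo a b))) :
    ∫⁻ u in Ioo a b, ∫⁻ v in Ioc u b, f v = ∫⁻ v in Ioo a b, f v * ENNReal.ofReal (v - a) := by
  simp_rw [← withDensity_apply f measurableSet_Ioc]
  rw [lintegral_Ioo_measure_Ioc_right, restrict_withDensity measurableSet_Ioc,
    ← Measure.restrict_congr_set Ioo_ae_eq_Ioc,
    lintegral_withDensity_eq_lintegral_mul₀ hf (by fun_prop)]
  rfl

lemma integrable_iff_and_integral_eq_of_lintegral_ofReal_eq {α : Type*} [MeasurableSpace α]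
    {μ : Measure α} {f g : α → ℝ} (hf : AEStronglyMeasurable f μ) (hg : AEStronglyMeasurable g μ)
    (hf0 : 0 ≤ᵐ[μ] f) (hg0 : 0 ≤ᵐ[μ] g)
    (h : ∫⁻ x, ENNReal.ofReal (f x) ∂μ = ∫⁻ x, ENNReal.ofReal (g x) ∂μ) :
    (Integrable f μ ↔ Integrable g μ) ∧ ∫ x, f x ∂μ = ∫ x, g x ∂μ := by
  refine ⟨?_, ?_⟩
  · rw [← lintegral_ofReal_ne_top_iff_integrable hf hf0,
      ← lintegral_ofReal_ne_top_iff_integrable hg hg0, h]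
  · rw [integral_eq_lintegral_of_nonneg_ae hf0 hf, integral_eq_lintegral_of_nonneg_ae hg0 hg, h]

lemma integrable_mul_iff_of_bounds {α : Type*} [MeasurableSpace α] {μ : Measure α}
    {w f : α → ℝ} {c C : ℝ} (hc : 0 < c) (hw : AEStronglyMeasurable w μ)
    (hwb : ∀ᵐ x ∂μ, c ≤ w x ∧ w x ≤ C) :
    Integrable (fun x => w x * f x) μ ↔ Integrable f μ := by
  constructor
  · intro h
    refine (h.bdd_mul (c := c⁻¹) hw.aemeasurable.inv.aestronglyMeasurable ?_).congr ?_
    · filter_upwards [hwb] with x hx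
      rw [Pi.inv_apply, norm_inv, Real.norm_of_nonneg (hc.le.trans hx.1)]
      exact inv_anti₀ hc hx.1
    · filter_upwards [hwb] with x hx
      rw [Pi.inv_apply, inv_mul_cancel_left₀ (hc.trans_le hx.1).ne']
  · intro h
    refine h.bdd_mul (c := C) hw ?_
    filter_upwards [hwb] with x hx
    rw [Real.norm_of_nonneg (hc.le.trans hx.1)]
    exact hx.2

section Primitive

variable {F : ℝ → ℝ} {a b m : ℝ}

lemma continuousOn_primitive_Ioo (hF : ContinuousOn F (Ioo a b)) (hm : m ∈ Ioo a b) :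
    ContinuousOn (fun u => ∫ v in m..u, F v) (Ioo a b) := by
  intro u hu
  have hsub : uIcc m u ⊆ Ioo a b := ordConnected_Ioo.uIcc_subset hm hu
  exact (intervalIntegral.integral_hasDerivAt_right (hF.mono hsub).intervalIntegrable
    (hF.stronglyMeasurableAtFilter isOpen_Ioo u hu)
    (hF.continuousAt (isOpen_Ioo.mem_nhds hu))).continuousAt.continuousWithinAt

lemma integrableOn_primitive_Ioo_right (hF : ContinuousOn F (Ioo a b))
    (hF0 : ∀ v ∈ Ioo a b, 0 ≤ F v) (hm : m ∈ Ioo a b) :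
    (IntegrableOn (fun u => ∫ v in m..u, F v) (Ioo m b) ↔
      IntegrableOn (fun v => (b - v) * F v) (Ioo m b)) ∧
    ∫ u in Ioo m b, ∫ v in m..u, F v = ∫ v in Ioo m b, (b - v) * F v := by
  have hsub : Ioo m b ⊆ Ioo a b := Ioo_subset_Ioo_left hm.1.le
  have hIcc : ∀ u ∈ Ioo m b, Icc m u ⊆ Ioo a b := fun u hu =>
    ordConnected_Ioo.out hm (hsub hu)
  apply integrable_iff_and_integral_eq_of_lintegral_ofReal_eq
  · exact ((continuousOn_primitive_Ioo hF hm).mono hsub).aestronglyMeasurable measurableSet_Ioo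
  · exact (((continuousOn_const.sub continuousOn_id).mul hF).mono hsub).aestronglyMeasurable
      measurableSet_Ioo
  · refine (ae_restrict_iff' measurableSet_Ioo).2 (Eventually.of_forall fun u hu => ?_)
    exact intervalIntegral.integral_nonneg hu.1.le fun v hv => hF0 v (hIcc u hu hv)
  · refine (ae_restrict_iff' measurableSet_Ioo).2 (Eventually.of_forall fun v hv => ?_)
    exact mul_nonneg (sub_nonneg.2 hv.2.le) (hF0 v (hsub hv))
  calc ∫⁻ u in Ioo m b, ENNReal.ofReal (∫ v in m..u, F v)
      = ∫⁻ u in Ioo m b, ∫⁻ v in Ioc m u, ENNReal.ofReal (F v) := by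
        refine setLIntegral_congr_fun measurableSet_Ioo fun u hu => ?_
        rw [intervalIntegral.integral_of_le hu.1.le]
        exact ofReal_integral_eq_lintegral_ofReal
          (((hF.mono (hIcc u hu)).integrableOn_Icc).mono_set Ioc_subset_Icc_self)
          ((ae_restrict_iff' measurableSet_Ioc).2 (Eventually.of_forall fun v hv =>
            hF0 v (hIcc u hu (Ioc_subset_Icc_self hv))))
    _ = ∫⁻ v in Ioo m b, ENNReal.ofReal (F v) * ENNReal.ofReal (b - v) :=
        lintegral_Ioo_setLIntegral_Ioc_left
          ((hF.mono hsub).aemeasurable measurableSet_Ioo).ennreal_ofReal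
    _ = ∫⁻ v in Ioo m b, ENNReal.ofReal ((b - v) * F v) := by
        refine setLIntegral_congr_fun measurableSet_Ioo fun v hv => ?_
        rw [mul_comm, ENNReal.ofReal_mul (sub_nonneg.2 hv.2.le)]

lemma integrableOn_primitive_Ioo_left (hF : ContinuousOn F (Ioo a b))
    (hF0 : ∀ v ∈ Ioo a b, 0 ≤ F v) (hm : m ∈ Ioo a b) :
    (IntegrableOn (fun u => ∫ v in m..u, F v) (Ioo a m) ↔
      IntegrableOn (fun v => (v - a) * F v) (Ioo a m)) ∧
    ∫ u in Ioo a m, ∫ v in m..u, F v = -∫ v in Ioo a m, (v - a) * F v := by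
  have hsub : Ioo a m ⊆ Ioo a b := Ioo_subset_Ioo_right hm.2.le
  have hIcc : ∀ u ∈ Ioo a m, Icc u m ⊆ Ioo a b := fun u hu =>
    ordConnected_Ioo.out (hsub hu) hm
  have key := integrable_iff_and_integral_eq_of_lintegral_ofReal_eq
    (μ := volume.restrict (Ioo a m)) (f := fun u => -∫ v in m..u, F v)
    (g := fun v => (v - a) * F v) ?_ ?_ ?_ ?_ ?_
  · refine ⟨integrable_neg_iff.symm.trans key.1, ?_⟩
    rw [← key.2, integral_neg, neg_neg]
  · exact ((continuousOn_primitive_Ioo hF hm).mono hsub).neg.aestronglyMeasurable measurableSet_Ioo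
  · exact (((continuousOn_id.sub continuousOn_const).mul hF).mono hsub).aestronglyMeasurable
      measurableSet_Ioo
  · refine (ae_restrict_iff' measurableSet_Ioo).2 (Eventually.of_forall fun u hu => ?_)
    dsimp only
    rw [Pi.zero_apply, ← intervalIntegral.integral_symm m u]
    exact intervalIntegral.integral_nonneg hu.2.le fun v hv => hF0 v (hIcc u hu hv)
  · refine (ae_restrict_iff' measurableSet_Ioo).2 (Eventually.of_forall fun v hv => ?_)
    exact mul_nonneg (sub_nonneg.2 hv.1.le) (hF0 v (hsub hv))
  calc ∫⁻ u in Ioo a m, ENNReal.ofReal (-∫ v in m..u, F v)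
      = ∫⁻ u in Ioo a m, ∫⁻ v in Ioc u m, ENNReal.ofReal (F v) := by
        refine setLIntegral_congr_fun measurableSet_Ioo fun u hu => ?_
        rw [← intervalIntegral.integral_symm, intervalIntegral.integral_of_le hu.2.le]
        exact ofReal_integral_eq_lintegral_ofReal
          (((hF.mono (hIcc u hu)).integrableOn_Icc).mono_set Ioc_subset_Icc_self)
          ((ae_restrict_iff' measurableSet_Ioc).2 (Eventually.of_forall fun v hv =>
            hF0 v (hIcc u hu (Ioc_subset_Icc_self hv))))
    _ = ∫⁻ v in Ioo a m, ENNReal.ofReal (F v) * ENNReal.ofReal (v - a) :=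
        lintegral_Ioo_setLIntegral_Ioc_right
          ((hF.mono hsub).aemeasurable measurableSet_Ioo).ennreal_ofReal
    _ = ∫⁻ v in Ioo a m, ENNReal.ofReal ((v - a) * F v) := by
        refine setLIntegral_congr_fun measurableSet_Ioo fun v hv => ?_
        rw [mul_comm, ENNReal.ofReal_mul (sub_nonneg.2 hv.1.le)]

end Primitive

section Split

variable {E : Type*} [NormedAddCommGroup E] {f : ℝ → E} {a b m : ℝ}

lemma integrableOn_Ioo_iff_of_mem (hm : m ∈ Icc a b) :
    IntegrableOn f (Ioo a b) ↔ IntegrableOn f (Ioo a m) ∧ IntegrableOn f (Ioo m b) := by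
  refine ⟨fun h => ⟨h.mono_set (Ioo_subset_Ioo_right hm.2), h.mono_set (Ioo_subset_Ioo_left hm.1)⟩,
    fun ⟨hl, hr⟩ => ?_⟩
  rw [← intervalIntegrable_iff_integrableOn_Ioo_of_le hm.1] at hl
  rw [← intervalIntegrable_iff_integrableOn_Ioo_of_le hm.2] at hr
  exact (intervalIntegrable_iff_integrableOn_Ioo_of_le (hm.1.trans hm.2)).1 (hl.trans hr)

lemma setIntegral_Ioo_eq_add_of_mem [NormedSpace ℝ E] (hm : m ∈ Icc a b)
    (hl : IntegrableOn f (Ioo a m)) (hr : IntegrableOn f (Ioo m b)) :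
    ∫ x in Ioo a b, f x = (∫ x in Ioo a m, f x) + ∫ x in Ioo m b, f x := by
  rw [← intervalIntegrable_iff_integrableOn_Ioo_of_le hm.1] at hl
  rw [← intervalIntegrable_iff_integrableOn_Ioo_of_le hm.2] at hr
  simp only [← integral_Ioc_eq_integral_Ioo]
  rw [← intervalIntegral.integral_of_le hm.1, ← intervalIntegral.integral_of_le hm.2,
    ← intervalIntegral.integral_of_le (hm.1.trans hm.2)]
  exact (intervalIntegral.integral_add_adjacent_intervals hl hr).symm

end Split

section Model

variable {γ σ2 : ℝ → ℝ}

noncomputable def psiDensity (γ σ2 : ℝ → ℝ) (v : ℝ) : ℝ := σ2 v / (2 * (Gam γ v - mg γ * v))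

lemma continuousOn_Gam_sub_mg_mul (hγc : ContinuousOn γ (Icc 0 1)) :
    ContinuousOn (fun u => Gam γ u - mg γ * u) (Icc 0 1) := by
  have hGam := intervalIntegral.continuousOn_primitive_interval (μ := volume) (a := 0) (b := 1)
    (by rw [uIcc_of_le zero_le_one]; exact hγc.integrableOn_Icc)
  rw [uIcc_of_le zero_le_one] at hGam
  exact hGam.sub (continuousOn_const.mul continuousOn_id)

lemma continuousOn_psiDensity (hγc : ContinuousOn γ (Icc 0 1))
    (hσc : ContinuousOn σ2 (Icc 0 1)) (hE1 : ∀ u ∈ Ioo (0:ℝ) 1, 0 < Gam γ u - mg γ * u) :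
    ContinuousOn (psiDensity γ σ2) (Ioo 0 1) :=
  (hσc.mono Ioo_subset_Icc_self).div
    (continuousOn_const.mul ((continuousOn_Gam_sub_mg_mul hγc).mono Ioo_subset_Icc_self))
    fun u hu => by have := hE1 u hu; positivity

lemma psiDensity_nonneg (hUE : ∀ u ∈ Icc (0:ℝ) 1, 0 < σ2 u)
    (hE1 : ∀ u ∈ Ioo (0:ℝ) 1, 0 < Gam γ u - mg γ * u) {v : ℝ} (hv : v ∈ Ioo 0 1) :
    0 ≤ psiDensity γ σ2 v := by
  have := hUE v (Ioo_subset_Icc_self hv)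
  have := hE1 v hv
  unfold psiDensity
  positivity

lemma integrableOn_mul_psiDensity_iff (hσc : ContinuousOn σ2 (Icc 0 1))
    (hUE : ∀ u ∈ Icc (0:ℝ) 1, 0 < σ2 u) {s : Set ℝ} (hs : MeasurableSet s)
    (hs01 : s ⊆ Icc 0 1) (h : ℝ → ℝ) :
    IntegrableOn (fun v => h v * psiDensity γ σ2 v) s ↔
      IntegrableOn (fun v => h v / (Gam γ v - mg γ * v)) s := by
  obtain ⟨x₀, hx₀, hmin⟩ := isCompact_Icc.exists_isMinOn (nonempty_Icc.2 zero_le_one) hσc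
  obtain ⟨x₁, -, hmax⟩ := isCompact_Icc.exists_isMaxOn (nonempty_Icc.2 zero_le_one) hσc
  have hsplit : (fun v => h v * psiDensity γ σ2 v) =
      fun v => σ2 v / 2 * (h v / (Gam γ v - mg γ * v)) := by
    funext v
    unfold psiDensity
    generalize Gam γ v - mg γ * v = D
    ring
  rw [hsplit]
  refine integrable_mul_iff_of_bounds (c := σ2 x₀ / 2) (C := σ2 x₁ / 2) (half_pos (hUE x₀ hx₀))
    ((hσc.mono hs01).div_const 2 |>.aestronglyMeasurable hs)
    ((ae_restrict_iff' hs).2 (Eventually.of_forall fun v hv => ?_))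
  exact ⟨by linarith [isMinOn_iff.1 hmin v (hs01 hv)], by linarith [isMaxOn_iff.1 hmax v (hs01 hv)]⟩

lemma integrableOn_Psi_Ioo_half_one_iff_and_integral_eq (hγc : ContinuousOn γ (Icc 0 1))
    (hσc : ContinuousOn σ2 (Icc 0 1)) (hUE : ∀ u ∈ Icc (0:ℝ) 1, 0 < σ2 u)
    (hE1 : ∀ u ∈ Ioo (0:ℝ) 1, 0 < Gam γ u - mg γ * u) :
    (IntegrableOn (Psi γ σ2) (Ioo (1/2) 1) ↔
      IntegrableOn (fun u => (1 - u) / (Gam γ u - mg γ * u)) (Ioo (1/2) 1)) ∧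
    ∫ u in Ioo (1/2:ℝ) 1, Psi γ σ2 u =
      ∫ u in Ioo (1/2:ℝ) 1, (1 - u) * σ2 u / (2 * (Gam γ u - mg γ * u)) := by
  obtain ⟨hint, hval⟩ := integrableOn_primitive_Ioo_right (continuousOn_psiDensity hγc hσc hE1)
    (fun v hv => psiDensity_nonneg hUE hE1 hv) (show (1/2:ℝ) ∈ Ioo 0 1 by norm_num)
  refine ⟨hint.trans (integrableOn_mul_psiDensity_iff hσc hUE measurableSet_Ioo ?_ _), ?_⟩
  · exact Ioo_subset_Icc_self.trans (Icc_subset_Icc_left (by norm_num))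
  · simpa only [Psi, psiDensity, mul_div_assoc] using hval

lemma integrableOn_Psi_Ioo_zero_half_iff_and_integral_eq (hγc : ContinuousOn γ (Icc 0 1))
    (hσc : ContinuousOn σ2 (Icc 0 1)) (hUE : ∀ u ∈ Icc (0:ℝ) 1, 0 < σ2 u)
    (hE1 : ∀ u ∈ Ioo (0:ℝ) 1, 0 < Gam γ u - mg γ * u) :
    (IntegrableOn (Psi γ σ2) (Ioo 0 (1/2)) ↔
      IntegrableOn (fun u => u / (Gam γ u - mg γ * u)) (Ioo 0 (1/2))) ∧
    ∫ u in Ioo (0:ℝ) (1/2), Psi γ σ2 u =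
      -∫ u in Ioo (0:ℝ) (1/2), u * σ2 u / (2 * (Gam γ u - mg γ * u)) := by
  obtain ⟨hint, hval⟩ := integrableOn_primitive_Ioo_left (continuousOn_psiDensity hγc hσc hE1)
    (fun v hv => psiDensity_nonneg hUE hE1 hv) (show (1/2:ℝ) ∈ Ioo 0 1 by norm_num)
  simp only [sub_zero] at hint hval
  refine ⟨hint.trans (integrableOn_mul_psiDensity_iff hσc hUE measurableSet_Ioo ?_ id), ?_⟩
  · exact Ioo_subset_Icc_self.trans (Icc_subset_Icc_right (by norm_num))
  · simpa only [Psi, psiDensity, mul_div_assoc] using hval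

end Model

/-- under (UE) and (E1), Ψ is integrable on (0,1) iff (E2) holds, and
in that case ∫₀¹ Ψ = -∫₀^{1/2} u σ²(u)/(2(Γ(u)-gu)) du + ∫_{1/2}^1 (1-u) σ²(u)/(2(Γ(u)-gu)) du. -/
theorem stmt4 (γ σ2 : ℝ → ℝ) (hγc : ContinuousOn γ (Set.Icc 0 1))
    (hσc : ContinuousOn σ2 (Set.Icc 0 1)) (hUE : ∀ u ∈ Set.Icc (0:ℝ) 1, 0 < σ2 u)
    (hE1 : ∀ u ∈ Set.Ioo (0:ℝ) 1, 0 < Gam γ u - mg γ * u) :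
    (IntegrableOn (Psi γ σ2) (Set.Ioo 0 1) ↔
      (IntegrableOn (fun u => u / (Gam γ u - mg γ * u)) (Set.Ioo 0 (1/2)) ∧
        IntegrableOn (fun u => (1 - u) / (Gam γ u - mg γ * u)) (Set.Ioo (1/2) 1))) ∧
    ((IntegrableOn (fun u => u / (Gam γ u - mg γ * u)) (Set.Ioo 0 (1/2)) ∧
        IntegrableOn (fun u => (1 - u) / (Gam γ u - mg γ * u)) (Set.Ioo (1/2) 1)) →
      ∫ u in Set.Ioo (0:ℝ) 1, Psi γ σ2 u =
        -(∫ u in Set.Ioo (0:ℝ) (1/2), u * σ2 u / (2 * (Gam γ u - mg γ * u))) +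
          ∫ u in Set.Ioo (1/2:ℝ) 1, (1 - u) * σ2 u / (2 * (Gam γ u - mg γ * u))) := by
  have hm : (1/2:ℝ) ∈ Icc 0 1 := by norm_num
  obtain ⟨hL, hLval⟩ := integrableOn_Psi_Ioo_zero_half_iff_and_integral_eq hγc hσc hUE hE1
  obtain ⟨hR, hRval⟩ := integrableOn_Psi_Ioo_half_one_iff_and_integral_eq hγc hσc hUE hE1
  refine ⟨by rw [integrableOn_Ioo_iff_of_mem hm, hL, hR], fun ⟨hl, hr⟩ => ?_⟩
  rw [setIntegral_Ioo_eq_add_of_mem hm (hL.2 hl) (hR.2 hr), hLval, hRval]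
end

section
/- Let γ, σ² : [0,1] → ℝ be continuous with σ²(u) > 0 for all u ∈ [0,1] (condition (UE)), let Γ(u) := ∫₀^u γ(v) dv, g := ∫₀¹ γ(v) dv, assume (E1): Γ(u) − g·u > 0 for all u ∈ (0,1), and let Ψ(u) := ∫_{1/2}^u σ²(v)/(2(Γ(v) − g·v)) dv. If γ(1) < g, then, with p_c := 2(g − γ(1))/σ²(1) > 0, one has Ψ(u) ∼ −(1/p_c)·log(1−u) as u → 1⁻; that is, lim_{u→1⁻} Ψ(u)/(−log(1−u)) = 1/p_c. -/
open MeasureTheory Set Filter Topology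

/-! Since `Γ' = γ` and `Γ(1) = g`, the denominator `Γ(v) - g v` vanishes at `v = 1` with slope
`γ(1) - g < 0`, so the integrand of `Ψ` is asymptotic to `(1 / p_c) (1 - v)⁻¹` as `v → 1⁻`.
An asymptotic relation `f = o(h)` with `h ≥ 0` survives integration once `∫ h` diverges, and
`∫_a^u (1 - v)⁻¹ dv = -log (1 - u) + log (1 - a)`, whence `Ψ(u) ~ -(1 / p_c) log (1 - u)`. -/

open Asymptotics

theorem isLittleO_intervalIntegral_nhdsLT {f g : ℝ → ℝ} {a b : ℝ} (hab : a < b)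
    (hf : ∀ u ∈ Ico a b, IntervalIntegrable f volume a u)
    (hg : ∀ u ∈ Ico a b, IntervalIntegrable g volume a u)
    (hg_nonneg : ∀ᶠ v in 𝓝[<] b, 0 ≤ g v) (hfg : f =o[𝓝[<] b] g)
    (hG : Tendsto (fun u => ∫ v in a..u, g v) (𝓝[<] b) atTop) :
    (fun u => ∫ v in a..u, f v) =o[𝓝[<] b] fun u => ∫ v in a..u, g v := by
  refine isLittleO_iff.mpr fun c hc => ?_
  obtain ⟨l, hl, hsub⟩ := mem_nhdsLT_iff_exists_Ioo_subset.mp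
    (hg_nonneg.and (hfg.def (half_pos hc)))
  set m := max a l
  have hm : m ∈ Ico a b := ⟨le_max_left _ _, max_lt hab hl⟩
  set A := |∫ v in a..m, f v| - c / 2 * ∫ v in a..m, g v with hA
  filter_upwards [Ioo_mem_nhdsLT hm.2, hG.eventually_ge_atTop (2 / c * A),
    hG.eventually_ge_atTop 0] with u hu hGA hG0
  have hu' : u ∈ Ico a b := ⟨hm.1.trans hu.1.le, hu.2⟩
  have hfmu := (hf m hm).symm.trans (hf u hu')
  have hgmu := (hg m hm).symm.trans (hg u hu')
  have htail : |∫ v in m..u, f v| ≤ c / 2 * ∫ v in m..u, g v := by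
    rw [← intervalIntegral.integral_const_mul, ← Real.norm_eq_abs]
    refine intervalIntegral.norm_integral_le_of_norm_le hu.1.le
      (ae_of_all _ fun v hv => ?_) (hgmu.const_mul _)
    obtain ⟨hgv, hfv⟩ := hsub ⟨(le_max_right a l).trans_lt hv.1, hv.2.trans_lt hu.2⟩
    rwa [Real.norm_of_nonneg hgv] at hfv
  rw [Real.norm_of_nonneg hG0, Real.norm_eq_abs,
    ← intervalIntegral.integral_add_adjacent_intervals (hf m hm) hfmu]
  rw [← intervalIntegral.integral_add_adjacent_intervals (hg m hm) hgmu] at hGA ⊢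
  have hcA : A ≤ c / 2 * ((∫ v in a..m, g v) + ∫ v in m..u, g v) := by
    calc A = c / 2 * (2 / c * A) := by field_simp
      _ ≤ _ := by gcongr
  calc |(∫ v in a..m, f v) + ∫ v in m..u, f v|
      ≤ |∫ v in a..m, f v| + |∫ v in m..u, f v| := abs_add_le _ _
    _ ≤ c * ((∫ v in a..m, g v) + ∫ v in m..u, g v) := by linarith [hA]

theorem integral_inv_one_sub {a u : ℝ} (ha : a < 1) (hu : u < 1) :
    ∫ v in a..u, (1 - v)⁻¹ = Real.log (1 - a) - Real.log (1 - u) := by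
  rw [intervalIntegral.integral_comp_sub_left (fun v => v⁻¹), integral_inv,
    Real.log_div (by linarith) (by linarith)]
  rw [mem_uIcc]
  rintro (h | h) <;> linarith

theorem tendsto_neg_log_one_sub_nhdsLT :
    Tendsto (fun u : ℝ => -Real.log (1 - u)) (𝓝[<] 1) atTop := by
  have h : Tendsto (fun u : ℝ => 1 - u) (𝓝[<] 1) (𝓝[>] 0) := by
    have := ((continuous_sub_left (1:ℝ)).tendsto' 1 0 (sub_self 1)).mono_left
      (nhdsWithin_le_nhds (s := Iio 1))
    exact tendsto_nhdsWithin_of_tendsto_nhds_of_eventually_within _ this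
      (eventually_nhdsWithin_of_forall fun u (hu : u < 1) => (sub_pos.mpr hu : (0:ℝ) < 1 - u))
  exact tendsto_neg_atBot_atTop.comp (Real.tendsto_log_nhdsGT_zero.comp h)

theorem tendsto_intervalIntegral_div_neg_log_one_sub {f : ℝ → ℝ} {a L : ℝ} (ha : a < 1)
    (hf : ∀ u ∈ Ico a 1, IntervalIntegrable f volume a u)
    (hL : Tendsto (fun v => f v * (1 - v)) (𝓝[<] 1) (𝓝 L)) :
    Tendsto (fun u => (∫ v in a..u, f v) / -Real.log (1 - u)) (𝓝[<] 1) (𝓝 L) := by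
  set D : ℝ → ℝ := fun u => -Real.log (1 - u)
  have hD := tendsto_neg_log_one_sub_nhdsLT
  have hinv_int : ∀ u ∈ Ico a 1, IntervalIntegrable (fun v => (1 - v)⁻¹) volume a u := by
    intro u hu
    refine ContinuousOn.intervalIntegrable fun v hv => ?_
    have : v < 1 := by rw [uIcc_of_le hu.1] at hv; exact hv.2.trans_lt hu.2
    exact ((continuous_sub_left 1).continuousAt.inv₀
      (sub_ne_zero.mpr this.ne')).continuousWithinAt
  have hsmall : (fun v => f v - L * (1 - v)⁻¹) =o[𝓝[<] 1] fun v => (1 - v)⁻¹ := by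
    have h0 : Tendsto (fun v => f v * (1 - v) - L) (𝓝[<] 1) (𝓝 0) := by
      simpa using hL.sub_const L
    refine (((isLittleO_one_iff ℝ).mpr h0).mul_isBigO
      (isBigO_refl (fun v => (1 - v)⁻¹) _)).congr' ?_ (by simp)
    filter_upwards [self_mem_nhdsWithin] with v (hv : v < 1)
    field_simp [sub_ne_zero.mpr hv.ne']
  have hG :
      (fun u => ∫ v in a..u, (1 - v)⁻¹) =ᶠ[𝓝[<] 1] fun u => Real.log (1 - a) + D u :=
    eventually_nhdsWithin_of_forall fun u (hu : u < 1) => by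
      simp only [integral_inv_one_sub ha hu, D]; ring
  have hrem := isLittleO_intervalIntegral_nhdsLT ha
    (fun u hu => (hf u hu).sub ((hinv_int u hu).const_mul L)) hinv_int
    (eventually_nhdsWithin_of_forall fun v (hv : v < 1) => inv_nonneg.mpr (sub_pos.mpr hv).le)
    hsmall ((tendsto_atTop_add_const_left _ _ hD).congr' hG.symm)
  have hGD : (fun u => ∫ v in a..u, (1 - v)⁻¹) =O[𝓝[<] 1] D := by
    refine IsBigO.congr' ?_ hG.symm EventuallyEq.rfl
    exact ((isLittleO_const_left.mpr (Or.inr (tendsto_abs_atTop_atTop.comp hD))).isBigO).add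
      (isBigO_refl D _)
  have hsplit : (fun u => (∫ v in a..u, f v) / D u) =ᶠ[𝓝[<] 1] fun u =>
      (∫ v in a..u, f v - L * (1 - v)⁻¹) / D u + L * (Real.log (1 - a) / D u + 1) := by
    filter_upwards [hG, Ioo_mem_nhdsLT ha, hD.eventually_gt_atTop 0] with u hGu hu hDu
    have hDu : D u ≠ 0 := hDu.ne'
    have hu' : u ∈ Ico a 1 := ⟨hu.1.le, hu.2⟩
    rw [intervalIntegral.integral_sub (hf u hu') ((hinv_int u hu').const_mul L),
      intervalIntegral.integral_const_mul, hGu]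
    field_simp
    ring
  refine Tendsto.congr' hsplit.symm ?_
  simpa using ((hrem.trans_isBigO hGD).tendsto_div_nhds_zero).add
    (((tendsto_const_nhds.div_atTop hD).add_const 1).const_mul L)

theorem continuousOn_Gam {γ : ℝ → ℝ} (hγ : ContinuousOn γ (Icc 0 1)) :
    ContinuousOn (Gam γ) (Icc 0 1) := by
  have h := intervalIntegral.continuousOn_primitive_interval (a := 0) (b := 1) (μ := volume)
    (by rw [uIcc_of_le zero_le_one]; exact hγ.integrableOn_Icc)
  rwa [uIcc_of_le zero_le_one] at h

theorem hasDerivWithinAt_Gam_one {γ : ℝ → ℝ} (hγ : ContinuousOn γ (Icc 0 1)) :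
    HasDerivWithinAt (Gam γ) (γ 1) (Iic 1) 1 := by
  have hIcc : Icc (0:ℝ) 1 ∈ 𝓝[Iic 1] (1:ℝ) := Icc_mem_nhdsLE zero_lt_one
  refine intervalIntegral.integral_hasDerivWithinAt_right
    (hγ.intervalIntegrable_of_Icc zero_le_one)
    ⟨Icc 0 1, hIcc, hγ.aestronglyMeasurable measurableSet_Icc⟩ ?_
  exact (hγ 1 ⟨zero_le_one, le_rfl⟩).mono_of_mem_nhdsWithin hIcc

theorem tendsto_Gam_sub_mg_mul_div_one_sub {γ : ℝ → ℝ} (hγ : ContinuousOn γ (Icc 0 1)) :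
    Tendsto (fun v => (Gam γ v - mg γ * v) / (1 - v)) (𝓝[<] 1) (𝓝 (mg γ - γ 1)) := by
  have hderiv : HasDerivWithinAt (fun v => Gam γ v - mg γ * v) (γ 1 - mg γ) (Iio 1) 1 := by
    have hlin := (hasDerivWithinAt_id (1:ℝ) (Iic 1)).const_mul (mg γ)
    rw [mul_one] at hlin
    exact ((hasDerivWithinAt_Gam_one hγ).sub hlin).mono Iio_subset_Iic_self
  rw [hasDerivWithinAt_iff_tendsto_slope' (self_notMem_Iio (a := (1:ℝ)))] at hderiv
  have hP1 : Gam γ 1 - mg γ * 1 = 0 := by rw [mul_one]; exact sub_self _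
  refine (neg_sub (γ 1) (mg γ) ▸ hderiv.neg).congr fun v => ?_
  rw [slope_def_field, hP1, sub_zero, ← div_neg, neg_sub]

/-- under (UE) and (E1), if γ(1) < g then p_c > 0 and
Ψ(u) ~ -(1/p_c) log(1-u) as u → 1⁻, i.e. Ψ(u)/(-log(1-u)) → 1/p_c. -/
theorem stmt5 (γ σ2 : ℝ → ℝ) (hγc : ContinuousOn γ (Set.Icc 0 1))
    (hσc : ContinuousOn σ2 (Set.Icc 0 1)) (hUE : ∀ u ∈ Set.Icc (0:ℝ) 1, 0 < σ2 u)
    (hE1 : ∀ u ∈ Set.Ioo (0:ℝ) 1, 0 < Gam γ u - mg γ * u)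
    (h1 : γ 1 < mg γ) :
    0 < pcrit γ σ2 ∧
      Filter.Tendsto (fun u => Psi γ σ2 u / (-Real.log (1 - u)))
        (nhdsWithin 1 (Set.Iio 1)) (nhds (1 / pcrit γ σ2)) := by
  have hσ1 : 0 < σ2 1 := hUE 1 ⟨zero_le_one, le_rfl⟩
  refine ⟨div_pos (mul_pos two_pos (sub_pos.mpr h1)) hσ1, ?_⟩
  have hcont : ContinuousOn (fun v => σ2 v / (2 * (Gam γ v - mg γ * v))) (Ico (1/2) 1) := by
    have hsub : Ico (1/2 : ℝ) 1 ⊆ Icc 0 1 := fun v hv => ⟨by linarith [hv.1], hv.2.le⟩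
    refine (hσc.mono hsub).div (continuousOn_const.mul
      (((continuousOn_Gam hγc).sub (continuousOn_const.mul continuousOn_id)).mono hsub)) ?_
    exact fun v hv => mul_ne_zero two_ne_zero (hE1 v ⟨by linarith [hv.1], hv.2⟩).ne'
  have hσlim : Tendsto σ2 (𝓝[<] 1) (𝓝 (σ2 1)) :=
    nhdsWithin_Ico_eq_nhdsLT (zero_lt_one' ℝ) ▸
      (hσc 1 ⟨zero_le_one, le_rfl⟩).tendsto.mono_left (nhdsWithin_mono _ Ico_subset_Icc_self)
  have hlim : Tendsto (fun v => σ2 v / (2 * (Gam γ v - mg γ * v)) * (1 - v)) (𝓝[<] 1)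
      (𝓝 (1 / pcrit γ σ2)) := by
    rw [pcrit, one_div_div]
    refine (hσlim.div ((tendsto_Gam_sub_mg_mul_div_one_sub hγc).const_mul 2)
      (mul_pos two_pos (sub_pos.mpr h1)).ne').congr fun v => ?_
    rw [Pi.div_apply, mul_div_assoc', div_div_eq_mul_div, div_mul_eq_mul_div]
  refine tendsto_intervalIntegral_div_neg_log_one_sub (by norm_num) (fun u hu => ?_) hlim
  exact (hcont.mono (by rw [uIcc_of_le hu.1]; exact Icc_subset_Ico_right hu.2)).intervalIntegrable
end

section
/- Let γ, σ² : [0,1] → ℝ be continuous with σ²(u) > 0 for all u ∈ [0,1] (condition (UE)), let Γ(u) := ∫₀^u γ(v) dv, g := ∫₀¹ γ(v) dv, assume (E1): Γ(u) − g·u > 0 for all u ∈ (0,1), and let Ψ(u) := ∫_{1/2}^u σ²(v)/(2(Γ(v) − g·v)) dv. If γ(0) > g, then, with q_c := 2(γ(0) − g)/σ²(0) > 0, one has Ψ(u) ∼ (1/q_c)·log u as u → 0⁺; that is, lim_{u→0⁺} Ψ(u)/log u = 1/q_c. -/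
open MeasureTheory Set Filter Topology

set_option maxHeartbeats 2000000 in
/-- under (UE) and (E1), if γ(0) > g then q_c > 0 and
Ψ(u) ~ (1/q_c) log u as u → 0⁺, i.e. Ψ(u)/log(u) → 1/q_c. -/
theorem stmt6 (γ σ2 : ℝ → ℝ) (hγc : ContinuousOn γ (Set.Icc 0 1))
    (hσc : ContinuousOn σ2 (Set.Icc 0 1)) (hUE : ∀ u ∈ Set.Icc (0:ℝ) 1, 0 < σ2 u)
    (hE1 : ∀ u ∈ Set.Ioo (0:ℝ) 1, 0 < Gam γ u - mg γ * u)
    (h0 : γ 0 > mg γ) :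
    0 < qcrit γ σ2 ∧
      Filter.Tendsto (fun u => Psi γ σ2 u / Real.log u)
        (nhdsWithin 0 (Set.Ioi 0)) (nhds (1 / qcrit γ σ2)) := by
  have h01 : (0:ℝ) < 1 := one_pos
  have hσ0 : 0 < σ2 0 := hUE 0 ⟨le_rfl, h01.le⟩
  have hnum : 0 < 2 * (γ 0 - mg γ) := by linarith
  have hq : 0 < qcrit γ σ2 := div_pos hnum hσ0
  refine ⟨hq, ?_⟩
  set c : ℝ := σ2 0 / (2 * (γ 0 - mg γ)) with hc
  have hcq : 1 / qcrit γ σ2 = c := by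
    rw [qcrit, one_div_div]
  rw [hcq]
  have hcpos : 0 < c := div_pos hσ0 hnum
  set f : ℝ → ℝ := fun v => σ2 v / (2 * (Gam γ v - mg γ * v)) with hf
  -- continuity of Gam on [0,1]
  have hGamC : ContinuousOn (Gam γ) (Set.Icc 0 1) := by
    have hint : IntegrableOn γ (Set.uIcc (0:ℝ) 1) volume := by
      rw [Set.uIcc_of_le h01.le]
      exact hγc.integrableOn_Icc
    have := intervalIntegral.continuousOn_primitive_interval (a := (0:ℝ)) (b := 1)
      (μ := volume) hint
    rwa [Set.uIcc_of_le h01.le] at this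
  -- continuity of f on compact subintervals of (0,1)
  have hfC : ∀ a b : ℝ, 0 < a → b < 1 → ContinuousOn f (Set.Icc a b) := by
    intro a b ha hb
    have hsub : Set.Icc a b ⊆ Set.Icc 0 1 := Set.Icc_subset_Icc ha.le hb.le
    refine ContinuousOn.div (hσc.mono hsub) ?_ ?_
    · exact continuousOn_const.mul ((hGamC.mono hsub).sub
        (continuousOn_const.mul continuousOn_id))
    · intro x hx
      have hpos : 0 < Gam γ x - mg γ * x :=
        hE1 x ⟨lt_of_lt_of_le ha hx.1, lt_of_le_of_lt hx.2 hb⟩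
      exact ne_of_gt (by linarith)
  have hfInt : ∀ x y : ℝ, 0 < x → x ≤ y → y < 1 → IntervalIntegrable f volume x y := by
    intro x y hx hxy hy
    apply ContinuousOn.intervalIntegrable
    rw [Set.uIcc_of_le hxy]
    exact hfC x y hx hy
  -- FTC: Gam γ v / v → γ 0
  have hioi : 𝓝[Set.Ioi (0:ℝ)] 0 ≤ 𝓝[Set.Icc (0:ℝ) 1] 0 := by
    rw [← nhdsWithin_Ioc_eq_nhdsGT h01]
    exact nhdsWithin_mono _ Set.Ioc_subset_Icc_self
  have hslope : Tendsto (fun v => Gam γ v / v) (𝓝[>] (0:ℝ)) (𝓝 (γ 0)) := by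
    have hmeas : StronglyMeasurableAtFilter γ (𝓝[Set.Ioi (0:ℝ)] 0) volume :=
      ⟨Set.Icc 0 1, hioi self_mem_nhdsWithin,
        hγc.aestronglyMeasurable measurableSet_Icc⟩
    have hb : ContinuousWithinAt γ (Set.Ioi (0:ℝ)) 0 :=
      (hγc 0 ⟨le_rfl, h01.le⟩).mono_left hioi
    have hd : HasDerivWithinAt (Gam γ) (γ 0) (Set.Ici 0) 0 :=
      intervalIntegral.integral_hasDerivWithinAt_right
        (IntervalIntegrable.refl (f := γ) (μ := volume) (a := 0)) hmeas hb
    have hs := hasDerivWithinAt_iff_tendsto_slope.mp hd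
    rw [Set.Ici_sdiff_left] at hs
    refine hs.congr fun v => ?_
    simp [slope_def_field, Gam, div_sub_div_same, intervalIntegral.integral_same]
  -- key limit : v * f v → c
  have hvf : Tendsto (fun v => v * f v) (𝓝[>] (0:ℝ)) (𝓝 c) := by
    have hσ2lim : Tendsto σ2 (𝓝[>] (0:ℝ)) (𝓝 (σ2 0)) :=
      (hσc 0 ⟨le_rfl, h01.le⟩).mono_left hioi
    have hden : Tendsto (fun v => 2 * (Gam γ v / v - mg γ)) (𝓝[>] (0:ℝ))
        (𝓝 (2 * (γ 0 - mg γ))) :=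
      (tendsto_const_nhds.mul (hslope.sub_const _))
    have hlim : Tendsto (fun v => σ2 v / (2 * (Gam γ v / v - mg γ))) (𝓝[>] (0:ℝ)) (𝓝 c) :=
      hσ2lim.div hden (ne_of_gt hnum)
    refine hlim.congr' ?_
    filter_upwards [self_mem_nhdsWithin] with v hv
    have hv0 : v ≠ 0 := ne_of_gt hv
    have : Gam γ v / v - mg γ = (Gam γ v - mg γ * v) / v := by
      field_simp
    rw [this, ← mul_div_assoc, div_div_eq_mul_div, mul_comm (σ2 v) v, mul_div_assoc]
  -- main epsilon argument
  rw [Metric.tendsto_nhds]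
  intro ε hε
  have hε3 : 0 < ε / 3 := by linarith
  obtain ⟨δ, hδpos, hδ⟩ := Metric.tendsto_nhdsWithin_nhds.mp hvf (ε / 3) hε3
  set δ₀ : ℝ := min (δ / 2) (1 / 2) with hδ₀
  have hδ₀pos : 0 < δ₀ := lt_min (by linarith) (by norm_num)
  have hδ₀half : δ₀ ≤ 1 / 2 := min_le_right _ _
  have hδ₀lt1 : δ₀ < 1 := lt_of_le_of_lt hδ₀half (by norm_num)
  have hδ₀δ : δ₀ < δ := lt_of_le_of_lt (min_le_left _ _) (by linarith)
  have hbound : ∀ v : ℝ, 0 < v → v ≤ δ₀ → |v * f v - c| ≤ ε / 3 := by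
    intro v hv hvd
    have := hδ (Set.mem_Ioi.mpr hv) (by
      rw [Real.dist_eq, sub_zero, abs_of_pos hv]; linarith)
    rw [Real.dist_eq] at this
    linarith [le_of_lt this]
  -- limits as u → 0+
  have hlogB : Tendsto Real.log (𝓝[>] (0:ℝ)) atBot := Real.tendsto_log_nhdsGT_zero
  have hinv : Tendsto (fun u => (Real.log u)⁻¹) (𝓝[>] (0:ℝ)) (𝓝 0) := by
    have h1 : Tendsto (fun u => -Real.log u) (𝓝[>] (0:ℝ)) atTop :=
      tendsto_neg_atBot_atTop.comp hlogB
    have h2 := h1.inv_tendsto_atTop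
    have h3 : Tendsto (fun u => -(-Real.log u)⁻¹) (𝓝[>] (0:ℝ)) (𝓝 (-0)) := h2.neg
    rw [neg_zero] at h3
    refine h3.congr fun u => ?_
    rw [inv_neg, neg_neg]
  have hA : Tendsto (fun u => Psi γ σ2 δ₀ * (Real.log u)⁻¹) (𝓝[>] (0:ℝ)) (𝓝 0) := by
    simpa using hinv.const_mul (Psi γ σ2 δ₀)
  have hB : Tendsto (fun u => (c + ε / 3) * (Real.log δ₀ * (Real.log u)⁻¹))
      (𝓝[>] (0:ℝ)) (𝓝 0) := by
    simpa using (hinv.const_mul (Real.log δ₀)).const_mul (c + ε / 3)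
  have hAe : ∀ᶠ u in 𝓝[>] (0:ℝ), |Psi γ σ2 δ₀ * (Real.log u)⁻¹| < ε / 3 := by
    have := hA (Metric.ball_mem_nhds 0 hε3)
    filter_upwards [this] with u hu
    rw [Set.mem_preimage, Metric.mem_ball, Real.dist_eq, sub_zero] at hu
    exact hu
  have hBe : ∀ᶠ u in 𝓝[>] (0:ℝ),
      |(c + ε / 3) * (Real.log δ₀ * (Real.log u)⁻¹)| < ε / 3 := by
    have := hB (Metric.ball_mem_nhds 0 hε3)
    filter_upwards [this] with u hu
    rw [Set.mem_preimage, Metric.mem_ball, Real.dist_eq, sub_zero] at hu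
    exact hu
  have hmem : Set.Ioo (0:ℝ) δ₀ ∈ 𝓝[>] (0:ℝ) := Ioo_mem_nhdsGT_of_mem ⟨le_rfl, hδ₀pos⟩
  filter_upwards [hAe, hBe, hmem] with u hAu hBu huIoo
  obtain ⟨hu0, huδ⟩ := huIoo
  have hu1 : u < 1 := lt_trans huδ hδ₀lt1
  have hLu : Real.log u < 0 := Real.log_neg hu0 hu1
  have hLune : Real.log u ≠ 0 := ne_of_lt hLu
  set M : ℝ := -Real.log u with hM
  have hMpos : 0 < M := by simp [hM]; linarith
  set t : ℝ := Real.log δ₀ with ht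
  have htneg : t < 0 := Real.log_neg hδ₀pos hδ₀lt1
  have htM : t + M > 0 := by
    have : Real.log u < t := Real.log_lt_log hu0 huδ
    simp only [hM]; linarith
  -- integral decomposition
  have hint1 : IntervalIntegrable f volume δ₀ (1/2) :=
    hfInt δ₀ (1/2) hδ₀pos hδ₀half (by norm_num)
  have hint2 : IntervalIntegrable f volume u δ₀ :=
    hfInt u δ₀ hu0 huδ.le hδ₀lt1
  have hsplit : Psi γ σ2 u = Psi γ σ2 δ₀ + ∫ v in δ₀..u, f v := by
    rw [Psi, Psi]
    exact (intervalIntegral.integral_add_adjacent_intervals hint1.symm hint2.symm).symm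
  set I : ℝ := ∫ v in u..δ₀, f v with hI
  have hIneg : (∫ v in δ₀..u, f v) = -I := by
    rw [hI, intervalIntegral.integral_symm]
  -- pointwise bounds on f on [u, δ₀]
  have hptup : ∀ x ∈ Set.Icc u δ₀, f x ≤ (c + ε / 3) / x := by
    intro x hx
    have hx0 : 0 < x := lt_of_lt_of_le hu0 hx.1
    have hb := abs_le.mp (hbound x hx0 hx.2)
    have h1 : x * f x ≤ c + ε / 3 := by linarith [hb.2]
    calc f x = x * f x / x := by field_simp
    _ ≤ (c + ε / 3) / x := by gcongr
  have hptlo : ∀ x ∈ Set.Icc u δ₀, (c - ε / 3) / x ≤ f x := by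
    intro x hx
    have hx0 : 0 < x := lt_of_lt_of_le hu0 hx.1
    have hb := abs_le.mp (hbound x hx0 hx.2)
    have h1 : c - ε / 3 ≤ x * f x := by linarith [hb.1]
    calc (c - ε / 3) / x ≤ x * f x / x := by gcongr
    _ = f x := by field_simp
  have hgint : ∀ k : ℝ, IntervalIntegrable (fun x => k / x) volume u δ₀ := by
    intro k
    apply ContinuousOn.intervalIntegrable
    rw [Set.uIcc_of_le huδ.le]
    exact continuousOn_const.div continuousOn_id
      (fun x hx => ne_of_gt (lt_of_lt_of_le hu0 hx.1))
  have hgval : ∀ k : ℝ, (∫ x in u..δ₀, k / x) = k * (t + M) := by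
    intro k
    have h1 : (∫ x in u..δ₀, k / x) = k * ∫ x in u..δ₀, 1 / x := by
      rw [← intervalIntegral.integral_const_mul]
      congr 1
      ext x
      ring
    rw [h1, integral_one_div_of_pos hu0 hδ₀pos,
      Real.log_div (ne_of_gt hδ₀pos) (ne_of_gt hu0)]
    simp only [hM, ht]
    ring
  have hup : I ≤ (c + ε / 3) * (t + M) := by
    rw [← hgval (c + ε / 3)]
    exact intervalIntegral.integral_mono_on huδ.le hint2 (hgint _) hptup
  have hlo : (c - ε / 3) * (t + M) ≤ I := by
    rw [← hgval (c - ε / 3)]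
    exact intervalIntegral.integral_mono_on huδ.le (hgint _) hint2 hptlo
  -- arithmetic
  set r : ℝ := t / M with hr
  have hMne : M ≠ 0 := ne_of_gt hMpos
  have hrneg : r < 0 := div_neg_of_neg_of_pos htneg hMpos
  have hBr : |(c + ε / 3) * r| < ε / 3 := by
    have hconv : (c + ε / 3) * (t * (Real.log u)⁻¹) = -((c + ε / 3) * r) := by
      rw [hr, hM]
      field_simp
    rw [hconv, abs_neg] at hBu
    exact hBu
  have hBr' := abs_lt.mp hBr
  have hdivup : I / M ≤ (c + ε / 3) * (t + M) / M :=
    (div_le_div_iff_of_pos_right hMpos).mpr hup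
  have hdivlo : (c - ε / 3) * (t + M) / M ≤ I / M :=
    (div_le_div_iff_of_pos_right hMpos).mpr hlo
  have hkey1 : (c + ε / 3) * (t + M) / M = (c + ε / 3) * r + (c + ε / 3) := by
    rw [hr]; field_simp
  have hkey2 : (c - ε / 3) * (t + M) / M = (c - ε / 3) * r + (c - ε / 3) := by
    rw [hr]; field_simp
  have hmono : (c + ε / 3) * r ≤ (c - ε / 3) * r := by nlinarith
  have hEq : Psi γ σ2 u / Real.log u = Psi γ σ2 δ₀ * (Real.log u)⁻¹ + I / M := by
    rw [hsplit, hIneg, hM]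
    field_simp
  have hAu' := abs_lt.mp hAu
  rw [Real.dist_eq, hEq, abs_lt]
  rw [hkey1] at hdivup
  rw [hkey2] at hdivlo
  constructor <;> nlinarith
end

section
/- Let γ, σ² : [0,1] → ℝ be continuous with σ²(u) > 0 for all u ∈ [0,1] (condition (UE)), let Γ(u) := ∫₀^u γ(v) dv, g := ∫₀¹ γ(v) dv, assume (E1): Γ(u) − g·u > 0 for all u ∈ (0,1), let Ψ(u) := ∫_{1/2}^u σ²(v)/(2(Γ(v) − g·v)) dv, p_c := 2(g − γ(1))/σ²(1), q_c := 2(γ(0) − g)/σ²(0), and suppose p_c > 1 (so that Z̄ := ∫₀¹ exp(Ψ(u)) du < +∞). Define the capital density μ̄(u) := exp(Ψ(1−u))/Z̄ for u ∈ (0,1). Then: (i) lim_{u→0⁺} log μ̄(u)/log u = −1/p_c (so the capital distribution curve is linear with slope −1/p_c ∈ (−1,0) near 0); (ii) log μ̄(u) → −∞ as u → 1⁻; and (iii) if q_c > 0, then lim_{u→1⁻} log μ̄(u)/log(1−u) = 1/q_c. -/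
/-
Write `log μ̄(u) = Ψ(1 - u) - log Z̄`: everything reduces to the behaviour of `Ψ` at the
endpoints. `Ψ' = σ² / (2h)` with `h = Γ - g·id`, which vanishes at `0` and `1` with one-sided
slopes `γ(0) - g` and `γ(1) - g`. Hence `(1 - u) Ψ'(u) → 1/p_c` as `u → 1`, and `u Ψ'(u) → 1/q_c`
as `u → 0` when `q_c > 0`; L'Hôpital's rule for `∞/∞` turns these into `Ψ(u) ~ -(1/p_c) log (1 - u)`
and `Ψ(u) ~ (1/q_c) log u`. Without any sign on `q_c`, `h(v) = O(v)` still forces `Ψ' ≥ c/v` near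
`0`, so `Ψ → -∞` there. Finally `p_c > 1` gives `exp Ψ(u) ≤ (1 - u)^(-r)` near `1` for some
`r < 1`, so `Z̄` is finite and positive.
-/

open MeasureTheory Set Filter Topology

/-- the capital density μ̄(u) = exp(Ψ(1-u)) / Z̄ with Z̄ = ∫₀¹ exp(Ψ(u)) du. -/
noncomputable def mubar (γ σ2 : ℝ → ℝ) (u : ℝ) : ℝ :=
  Real.exp (Psi γ σ2 (1 - u)) / ∫ v in Set.Ioo (0:ℝ) 1, Real.exp (Psi γ σ2 v)

open Real

lemma tendsto_one_sub_nhdsLT_one : Tendsto (fun u : ℝ => 1 - u) (𝓝[<] 1) (𝓝[>] 0) := by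
  have h := Filter.map_subLeft_nhdsLT (c := (1 : ℝ)) (a := 1)
  rw [sub_self] at h
  exact h.le

lemma tendsto_one_sub_nhdsGT_zero : Tendsto (fun u : ℝ => 1 - u) (𝓝[>] 0) (𝓝[<] 1) := by
  have h := Filter.map_subLeft_nhdsGT (c := (1 : ℝ)) (a := 0)
  rw [sub_zero] at h
  exact h.le

lemma Filter.Tendsto.sub_const_div_of_tendsto_atBot {α : Type*} {l : Filter α} {a d : α → ℝ}
    {A : ℝ} (C : ℝ) (ha : Tendsto (fun x => a x / d x) l (𝓝 A)) (hd : Tendsto d l atBot) :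
    Tendsto (fun x => (a x - C) / d x) l (𝓝 A) := by
  simpa [sub_div] using ha.sub (tendsto_const_nhds.div_atBot hd)

section LHopital

variable {F G f g : ℝ → ℝ} {b : ℝ}

lemma eventually_div_lt_of_deriv_div_lt {L a : ℝ}
    (hF : ∀ᶠ x in 𝓝[<] b, HasDerivAt F (f x) x) (hG : ∀ᶠ x in 𝓝[<] b, HasDerivAt G (g x) x)
    (hg : ∀ᶠ x in 𝓝[<] b, 0 < g x) (hGtop : Tendsto G (𝓝[<] b) atTop)
    (hfg : ∀ᶠ x in 𝓝[<] b, f x / g x < L) (hLa : L < a) :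
    ∀ᶠ x in 𝓝[<] b, F x / G x < a := by
  obtain ⟨l, hlb : l < b, hl⟩ := mem_nhdsLT_iff_exists_Ioo_subset.1 (hF.and (hG.and (hg.and hfg)))
  obtain ⟨x₀, hlx₀, hx₀b⟩ := exists_between hlb
  -- `F - L G` is antitone near `b`; dividing by `G → ∞` kills the constant `F x₀ - L G x₀`.
  have hanti : AntitoneOn (fun x => F x - L * G x) (Ioo l b) := by
    have hderiv : ∀ x ∈ Ioo l b, HasDerivAt (fun x => F x - L * G x) (f x - L * g x) x :=
      fun x hx => (hl hx).1.sub ((hl hx).2.1.const_mul L)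
    refine antitoneOn_of_hasDerivWithinAt_nonpos (f' := fun x => f x - L * g x) (convex_Ioo l b)
      (fun x hx => (hderiv x hx).continuousAt.continuousWithinAt) ?_ ?_ <;>
      simp only [interior_Ioo] <;> intro x hx
    · exact (hderiv x hx).hasDerivWithinAt
    · obtain ⟨-, -, hgx, hfgx⟩ := hl hx
      linarith [(div_lt_iff₀ hgx).1 hfgx]
  filter_upwards [Ioo_mem_nhdsLT hx₀b, hGtop.eventually_gt_atTop 0,
    ((tendsto_const_nhds (x := F x₀ - L * G x₀)).div_atTop hGtop).eventually
      (gt_mem_nhds (sub_pos.2 hLa))]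
    with x hx hGx hCx
  have hle : F x - L * G x ≤ F x₀ - L * G x₀ := hanti ⟨hlx₀, hx₀b⟩ ⟨hlx₀.trans hx.1, hx.2⟩ hx.1.le
  rw [div_lt_iff₀ hGx] at hCx ⊢
  linarith

theorem lhopital_atTop_nhdsLT {L : ℝ}
    (hF : ∀ᶠ x in 𝓝[<] b, HasDerivAt F (f x) x) (hG : ∀ᶠ x in 𝓝[<] b, HasDerivAt G (g x) x)
    (hg : ∀ᶠ x in 𝓝[<] b, 0 < g x) (hGtop : Tendsto G (𝓝[<] b) atTop)
    (hfg : Tendsto (fun x => f x / g x) (𝓝[<] b) (𝓝 L)) :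
    Tendsto (fun x => F x / G x) (𝓝[<] b) (𝓝 L) := by
  refine tendsto_order.2 ⟨fun a haL => ?_, fun a hLa => ?_⟩
  · obtain ⟨L', haL', hL'L⟩ := exists_between haL
    have hfg' : ∀ᶠ x in 𝓝[<] b, -f x / g x < -L' := by
      filter_upwards [(tendsto_order.1 hfg).1 L' hL'L] with x hx
      rwa [neg_div, neg_lt_neg_iff]
    filter_upwards [eventually_div_lt_of_deriv_div_lt (hF.mono fun x hx => hx.neg) hG hg hGtop
      hfg' (neg_lt_neg haL')] with x hx
    rwa [Pi.neg_apply, neg_div, neg_lt_neg_iff] at hx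
  · obtain ⟨L', hLL', hL'a⟩ := exists_between hLa
    exact eventually_div_lt_of_deriv_div_lt hF hG hg hGtop ((tendsto_order.1 hfg).2 L' hLL') hL'a

end LHopital

lemma tendsto_div_neg_log_one_sub {F f : ℝ → ℝ} {L : ℝ}
    (hF : ∀ᶠ x in 𝓝[<] 1, HasDerivAt F (f x) x)
    (hf : Tendsto (fun x => (1 - x) * f x) (𝓝[<] 1) (𝓝 L)) :
    Tendsto (fun x => F x / -log (1 - x)) (𝓝[<] 1) (𝓝 L) := by
  have hpos : ∀ᶠ x in 𝓝[<] (1 : ℝ), 0 < 1 - x :=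
    eventually_nhdsWithin_of_forall fun x hx => sub_pos.2 hx
  refine lhopital_atTop_nhdsLT hF (g := fun x => 1 / (1 - x)) ?_ ?_
    (tendsto_neg_atBot_atTop.comp (tendsto_log_nhdsGT_zero.comp tendsto_one_sub_nhdsLT_one)) ?_
  · filter_upwards [hpos] with x hx
    have h := ((hasDerivAt_log hx.ne').comp_const_sub 1 x).neg
    rwa [neg_neg, ← one_div] at h
  · filter_upwards [hpos] with x hx
    positivity
  · refine hf.congr' ?_
    filter_upwards [hpos] with x hx
    field_simp

lemma tendsto_atBot_nhdsGT_zero_of_div_le_deriv {F f : ℝ → ℝ} {c : ℝ} (hc : 0 < c)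
    (hF : ∀ᶠ x in 𝓝[>] 0, HasDerivAt F (f x) x) (hf : ∀ᶠ x in 𝓝[>] 0, c / x ≤ f x) :
    Tendsto F (𝓝[>] 0) atBot := by
  obtain ⟨u, hu0 : 0 < u, hu⟩ := mem_nhdsGT_iff_exists_Ioo_subset.1 (hF.and hf)
  obtain ⟨x₀, hx₀, hx₀u⟩ := exists_between hu0
  have hmono : MonotoneOn (fun x => F x - c * log x) (Ioo 0 u) := by
    have hderiv : ∀ x ∈ Ioo 0 u, HasDerivAt (fun x => F x - c * log x) (f x - c * x⁻¹) x :=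
      fun x hx => (hu hx).1.sub ((hasDerivAt_log hx.1.ne').const_mul c)
    refine monotoneOn_of_hasDerivWithinAt_nonneg (f' := fun x => f x - c * x⁻¹) (convex_Ioo 0 u)
      (fun x hx => (hderiv x hx).continuousAt.continuousWithinAt) ?_ ?_ <;>
      simp only [interior_Ioo] <;> intro x hx
    · exact (hderiv x hx).hasDerivWithinAt
    · linarith [(hu hx).2, show c / x = c * x⁻¹ from div_eq_mul_inv c x]
  have hbound : ∀ x ∈ Ioo 0 x₀, F x ≤ c * log x + (F x₀ - c * log x₀) := fun x hx => by
    have := hmono ⟨hx.1, hx.2.trans hx₀u⟩ ⟨hx₀, hx₀u⟩ hx.2.le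
    linarith
  exact tendsto_atBot_mono' _ (eventually_of_mem (Ioo_mem_nhdsGT hx₀) hbound)
    (tendsto_atBot_add_const_right _ _ (tendsto_log_nhdsGT_zero.const_mul_atBot hc))

lemma integrableOn_exp_of_tendsto_div_neg_log_one_sub {Φ : ℝ → ℝ} {ℓ : ℝ} (hℓ : ℓ < 1)
    (hmono : MonotoneOn Φ (Ioo 0 1))
    (hlim : Tendsto (fun u => Φ u / -log (1 - u)) (𝓝[<] 1) (𝓝 ℓ)) :
    IntegrableOn (fun u => exp (Φ u)) (Ioo 0 1) := by
  obtain ⟨r, hℓr, hr1⟩ := exists_between hℓ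
  have hnear : ∀ᶠ u in 𝓝[<] (1 : ℝ), exp (Φ u) ≤ (1 - u) ^ (-r) := by
    filter_upwards [hlim.eventually (gt_mem_nhds hℓr), Ioo_mem_nhdsLT zero_lt_one]
      with u hu hu01
    have hlog : 0 < -log (1 - u) :=
      neg_pos.2 (log_neg (by linarith [hu01.2]) (by linarith [hu01.1]))
    rw [rpow_def_of_pos (by linarith [hu01.2]), exp_le_exp]
    linarith [(div_lt_iff₀ hlog).1 hu]
  obtain ⟨l, hl1, hl⟩ := mem_nhdsLT_iff_exists_Ioo_subset.1 hnear
  set u₀ := max l (1 / 2)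
  have hu₀ : u₀ ∈ Ioo (0 : ℝ) 1 := ⟨by positivity, max_lt hl1 (by norm_num)⟩
  have hdom : ∀ u ∈ Ioo (0 : ℝ) 1, exp (Φ u) ≤ exp (Φ u₀) + (1 - u) ^ (-r) := by
    intro u hu
    rcases le_or_gt u u₀ with h | h
    · have := exp_le_exp.2 (hmono hu hu₀ h)
      have := rpow_nonneg (sub_nonneg.2 hu.2.le) (-r)
      linarith
    · have : exp (Φ u) ≤ (1 - u) ^ (-r) := hl ⟨(le_max_left _ _).trans_lt h, hu.2⟩
      linarith [exp_pos (Φ u₀)]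
  have hrpow : IntegrableOn (fun u : ℝ => (1 - u) ^ (-r)) (Ioo 0 1) := by
    have := (intervalIntegral.intervalIntegrable_rpow' (a := 1) (b := 0)
      (by linarith : -1 < -r)).comp_sub_left 1
    rw [sub_self, sub_zero] at this
    exact (intervalIntegrable_iff_integrableOn_Ioo_of_le zero_le_one).1 this
  refine ((integrableOn_const (C := exp (Φ u₀)) measure_Ioo_lt_top.ne).add hrpow).mono'
    (aemeasurable_restrict_of_monotoneOn measurableSet_Ioo hmono).exp.aestronglyMeasurable ?_
  filter_upwards [ae_restrict_mem measurableSet_Ioo] with u hu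
  rw [norm_of_nonneg (exp_pos _).le]
  exact hdom u hu

/-- `Γ(v) - g v`, the function of condition (E1); `Ψ' = σ² / (2 detrendedGam)`. -/
noncomputable def detrendedGam (γ : ℝ → ℝ) (v : ℝ) : ℝ := Gam γ v - mg γ * v

section Model

variable {γ σ2 : ℝ → ℝ}

lemma detrendedGam_zero (γ : ℝ → ℝ) : detrendedGam γ 0 = 0 := by
  simp [detrendedGam, Gam]

lemma detrendedGam_one (γ : ℝ → ℝ) : detrendedGam γ 1 = 0 := by
  simp [detrendedGam, Gam, mg]

lemma hasDerivWithinAt_detrendedGam (hγc : ContinuousOn γ (Icc 0 1)) {x : ℝ}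
    (hx : x ∈ Icc (0 : ℝ) 1) : HasDerivWithinAt (detrendedGam γ) (γ x - mg γ) (Icc 0 1) x := by
  have : Fact (x ∈ Icc (0 : ℝ) 1) := ⟨hx⟩
  have hsub : uIcc 0 x ⊆ Icc (0 : ℝ) 1 := by
    rw [uIcc_of_le hx.1]
    exact Icc_subset_Icc le_rfl hx.2
  have hGam : HasDerivWithinAt (Gam γ) (γ x) (Icc 0 1) x :=
    intervalIntegral.integral_hasDerivWithinAt_right ((hγc.mono hsub).intervalIntegrable)
      (hγc.stronglyMeasurableAtFilter_nhdsWithin measurableSet_Icc x) (hγc x hx)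
  have h := hGam.sub ((hasDerivWithinAt_id x _).const_mul (mg γ))
  rwa [mul_one] at h

lemma tendsto_detrendedGam_div_one_sub (hγc : ContinuousOn γ (Icc 0 1)) :
    Tendsto (fun v => detrendedGam γ v / (1 - v)) (𝓝[<] 1) (𝓝 (mg γ - γ 1)) := by
  have h := hasDerivWithinAt_iff_tendsto_slope.1
    (hasDerivWithinAt_detrendedGam hγc (right_mem_Icc.2 zero_le_one))
  rw [Icc_sdiff_right, nhdsWithin_Ico_eq_nhdsLT zero_lt_one] at h
  rw [← neg_sub]
  refine h.neg.congr fun v => ?_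
  rw [slope_def_field, detrendedGam_one, sub_zero, ← div_neg, neg_sub]

lemma tendsto_detrendedGam_div_self (hγc : ContinuousOn γ (Icc 0 1)) :
    Tendsto (fun v => detrendedGam γ v / v) (𝓝[>] 0) (𝓝 (γ 0 - mg γ)) := by
  have h := hasDerivWithinAt_iff_tendsto_slope.1
    (hasDerivWithinAt_detrendedGam hγc (left_mem_Icc.2 zero_le_one))
  rw [Icc_sdiff_left, nhdsWithin_Ioc_eq_nhdsGT zero_lt_one] at h
  refine h.congr fun v => ?_
  rw [slope_def_field, detrendedGam_zero, sub_zero, sub_zero]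

lemma hasDerivAt_Psi (hγc : ContinuousOn γ (Icc 0 1)) (hσc : ContinuousOn σ2 (Icc 0 1))
    (hE1 : ∀ u ∈ Ioo (0 : ℝ) 1, 0 < detrendedGam γ u) {x : ℝ} (hx : x ∈ Ioo (0 : ℝ) 1) :
    HasDerivAt (Psi γ σ2) (σ2 x / (2 * detrendedGam γ x)) x := by
  have hcont : ContinuousOn (fun v => σ2 v / (2 * detrendedGam γ v)) (Ioo 0 1) := by
    refine (hσc.mono Ioo_subset_Icc_self).div (continuousOn_const.mul fun v hv => ?_)
      fun v hv => (mul_pos two_pos (hE1 v hv)).ne'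
    exact (hasDerivWithinAt_detrendedGam hγc (Ioo_subset_Icc_self hv)).continuousWithinAt.mono
      Ioo_subset_Icc_self
  have hsub : uIcc (1 / 2) x ⊆ Ioo (0 : ℝ) 1 :=
    ordConnected_Ioo.uIcc_subset ⟨by norm_num, by norm_num⟩ hx
  exact intervalIntegral.integral_hasDerivAt_right ((hcont.mono hsub).intervalIntegrable)
    (hcont.stronglyMeasurableAtFilter isOpen_Ioo x hx) (hcont.continuousAt (Ioo_mem_nhds hx.1 hx.2))

lemma monotoneOn_Psi (hγc : ContinuousOn γ (Icc 0 1)) (hσc : ContinuousOn σ2 (Icc 0 1))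
    (hUE : ∀ u ∈ Icc (0 : ℝ) 1, 0 < σ2 u) (hE1 : ∀ u ∈ Ioo (0 : ℝ) 1, 0 < detrendedGam γ u) :
    MonotoneOn (Psi γ σ2) (Ioo 0 1) := by
  have hderiv := fun x hx => hasDerivAt_Psi hγc hσc hE1 (x := x) hx
  refine monotoneOn_of_hasDerivWithinAt_nonneg (f' := fun x => σ2 x / (2 * detrendedGam γ x))
    (convex_Ioo 0 1) (fun x hx => (hderiv x hx).continuousAt.continuousWithinAt) ?_ ?_ <;>
    simp only [interior_Ioo] <;> intro x hx
  · exact (hderiv x hx).hasDerivWithinAt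
  · have := hUE x (Ioo_subset_Icc_self hx)
    have := hE1 x hx
    positivity

lemma tendsto_Psi_div_neg_log_one_sub (hγc : ContinuousOn γ (Icc 0 1))
    (hσc : ContinuousOn σ2 (Icc 0 1)) (hE1 : ∀ u ∈ Ioo (0 : ℝ) 1, 0 < detrendedGam γ u)
    (hg1 : mg γ - γ 1 ≠ 0) :
    Tendsto (fun u => Psi γ σ2 u / -log (1 - u)) (𝓝[<] 1) (𝓝 (1 / pcrit γ σ2)) := by
  refine tendsto_div_neg_log_one_sub (f := fun x => σ2 x / (2 * detrendedGam γ x)) ?_ ?_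
  · filter_upwards [Ioo_mem_nhdsLT zero_lt_one] with x hx using hasDerivAt_Psi hγc hσc hE1 hx
  · have hσ : Tendsto σ2 (𝓝[<] 1) (𝓝 (σ2 1)) :=
      ((hσc 1 (right_mem_Icc.2 zero_le_one)).mono_of_mem_nhdsWithin
        (Icc_mem_nhdsLT zero_lt_one)).tendsto
    have := hσ.div ((tendsto_detrendedGam_div_one_sub hγc).const_mul 2)
      (mul_ne_zero two_ne_zero hg1)
    rw [pcrit, one_div_div]
    refine this.congr fun x => ?_
    rw [Pi.div_apply, mul_div_assoc', div_div_eq_mul_div]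
    ring

lemma tendsto_Psi_one_sub_div_neg_log_one_sub (hγc : ContinuousOn γ (Icc 0 1))
    (hσc : ContinuousOn σ2 (Icc 0 1)) (hE1 : ∀ u ∈ Ioo (0 : ℝ) 1, 0 < detrendedGam γ u)
    (hg0 : γ 0 - mg γ ≠ 0) :
    Tendsto (fun u => Psi γ σ2 (1 - u) / -log (1 - u)) (𝓝[<] 1) (𝓝 (-(1 / qcrit γ σ2))) := by
  refine tendsto_div_neg_log_one_sub
    (f := fun x => -(σ2 (1 - x) / (2 * detrendedGam γ (1 - x)))) ?_ ?_
  · filter_upwards [Ioo_mem_nhdsLT zero_lt_one] with x hx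
    exact (hasDerivAt_Psi hγc hσc hE1 ⟨by linarith [hx.2], by linarith [hx.1]⟩).comp_const_sub 1 x
  · have hσ : Tendsto σ2 (𝓝[>] 0) (𝓝 (σ2 0)) :=
      ((hσc 0 (left_mem_Icc.2 zero_le_one)).mono_of_mem_nhdsWithin
        (Icc_mem_nhdsGT zero_lt_one)).tendsto
    have := ((hσ.div ((tendsto_detrendedGam_div_self hγc).const_mul 2)
      (mul_ne_zero two_ne_zero hg0)).comp tendsto_one_sub_nhdsLT_one).neg
    rw [qcrit, one_div_div]
    refine this.congr fun x => ?_
    rw [Function.comp_apply, Pi.div_apply, mul_div_assoc', div_div_eq_mul_div]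
    ring

lemma tendsto_Psi_nhdsGT_zero_atBot (hγc : ContinuousOn γ (Icc 0 1))
    (hσc : ContinuousOn σ2 (Icc 0 1)) (hE1 : ∀ u ∈ Ioo (0 : ℝ) 1, 0 < detrendedGam γ u)
    (hσ0 : 0 < σ2 0) : Tendsto (Psi γ σ2) (𝓝[>] 0) atBot := by
  set M := |γ 0 - mg γ| + 1
  have hM : 0 < M := by positivity
  have hσ : Tendsto σ2 (𝓝[>] 0) (𝓝 (σ2 0)) :=
    ((hσc 0 (left_mem_Icc.2 zero_le_one)).mono_of_mem_nhdsWithin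
      (Icc_mem_nhdsGT zero_lt_one)).tendsto
  -- near `0`, `Γ(v) - g v ≤ M v` and `σ²(v) ≥ σ²(0) / 2`, so `Ψ'(v) ≥ σ²(0) / (4 M v)`
  refine tendsto_atBot_nhdsGT_zero_of_div_le_deriv (c := σ2 0 / (4 * M)) (by positivity)
    (eventually_of_mem (Ioo_mem_nhdsGT zero_lt_one) fun x hx => hasDerivAt_Psi hγc hσc hE1 hx) ?_
  filter_upwards [Ioo_mem_nhdsGT zero_lt_one,
    (tendsto_detrendedGam_div_self hγc).eventually (gt_mem_nhds (lt_of_le_of_lt (le_abs_self _)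
      (lt_add_one _))), hσ.eventually (lt_mem_nhds (half_lt_self hσ0))] with x hx hslope hσx
  have hhx := hE1 x hx
  have hle : detrendedGam γ x ≤ M * x := ((div_lt_iff₀ hx.1).1 hslope).le
  calc σ2 0 / (4 * M) / x = σ2 0 / 2 / (2 * (M * x)) := by field_simp; ring
    _ ≤ σ2 x / (2 * detrendedGam γ x) := by gcongr; linarith

lemma mg_sub_pos_of_pcrit_pos (hσ1 : 0 < σ2 1) (hpc : 0 < pcrit γ σ2) : 0 < mg γ - γ 1 := by
  rw [pcrit] at hpc
  linarith [(div_pos_iff_of_pos_right hσ1).1 hpc]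

lemma sub_mg_pos_of_qcrit_pos (hσ0 : 0 < σ2 0) (hqc : 0 < qcrit γ σ2) : 0 < γ 0 - mg γ := by
  rw [qcrit] at hqc
  linarith [(div_pos_iff_of_pos_right hσ0).1 hqc]

lemma integral_exp_Psi_pos (hγc : ContinuousOn γ (Icc 0 1)) (hσc : ContinuousOn σ2 (Icc 0 1))
    (hUE : ∀ u ∈ Icc (0 : ℝ) 1, 0 < σ2 u) (hE1 : ∀ u ∈ Ioo (0 : ℝ) 1, 0 < detrendedGam γ u)
    (hpc : 1 < pcrit γ σ2) : 0 < ∫ v in Ioo (0 : ℝ) 1, exp (Psi γ σ2 v) := by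
  have hpc0 : 0 < pcrit γ σ2 := one_pos.trans hpc
  have : NeZero (volume.restrict (Ioo (0 : ℝ) 1)) := ⟨by simp⟩
  refine integral_exp_pos (integrableOn_exp_of_tendsto_div_neg_log_one_sub
    ((div_lt_one hpc0).2 hpc) (monotoneOn_Psi hγc hσc hUE hE1) ?_)
  exact tendsto_Psi_div_neg_log_one_sub hγc hσc hE1
    (mg_sub_pos_of_pcrit_pos (hUE 1 (right_mem_Icc.2 zero_le_one)) hpc0).ne'

end Model

/-- under (UE), (E1) and p_c > 1 the capital density μ̄ satisfies
(i) log μ̄(u)/log u → -1/p_c ∈ (-1,0) as u → 0⁺; (ii) log μ̄(u) → -∞ as u → 1⁻;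
(iii) if q_c > 0, log μ̄(u)/log(1-u) → 1/q_c as u → 1⁻. -/
theorem stmt16 (γ σ2 : ℝ → ℝ) (hγc : ContinuousOn γ (Set.Icc 0 1))
    (hσc : ContinuousOn σ2 (Set.Icc 0 1)) (hUE : ∀ u ∈ Set.Icc (0:ℝ) 1, 0 < σ2 u)
    (hE1 : ∀ u ∈ Set.Ioo (0:ℝ) 1, 0 < Gam γ u - mg γ * u)
    (hpc : 1 < pcrit γ σ2) :
    Filter.Tendsto (fun u => Real.log (mubar γ σ2 u) / Real.log u)
        (nhdsWithin 0 (Set.Ioi 0)) (nhds (-(1 / pcrit γ σ2))) ∧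
      (-(1 / pcrit γ σ2)) ∈ Set.Ioo (-1 : ℝ) 0 ∧
      Filter.Tendsto (fun u => Real.log (mubar γ σ2 u))
        (nhdsWithin 1 (Set.Iio 1)) Filter.atBot ∧
      (0 < qcrit γ σ2 →
        Filter.Tendsto (fun u => Real.log (mubar γ σ2 u) / Real.log (1 - u))
          (nhdsWithin 1 (Set.Iio 1)) (nhds (1 / qcrit γ σ2))) := by
  have hσ0 : 0 < σ2 0 := hUE 0 (left_mem_Icc.2 zero_le_one)
  have hpc0 : 0 < pcrit γ σ2 := one_pos.trans hpc
  have hlog : ∀ u, log (mubar γ σ2 u) =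
      Psi γ σ2 (1 - u) - log (∫ v in Ioo (0 : ℝ) 1, exp (Psi γ σ2 v)) := fun u => by
    rw [mubar, log_div (exp_ne_zero _) (integral_exp_Psi_pos hγc hσc hUE hE1 hpc).ne', log_exp]
  simp only [hlog]
  refine ⟨?_, ⟨?_, ?_⟩, ?_, fun hqc => ?_⟩
  · refine Tendsto.sub_const_div_of_tendsto_atBot _ ?_ tendsto_log_nhdsGT_zero
    have hg1 := mg_sub_pos_of_pcrit_pos (hUE 1 (right_mem_Icc.2 zero_le_one)) hpc0
    refine ((tendsto_Psi_div_neg_log_one_sub hγc hσc hE1 hg1.ne').comp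
      tendsto_one_sub_nhdsGT_zero).neg.congr fun u => ?_
    rw [Function.comp_apply, sub_sub_cancel, div_neg, neg_neg]
  · linarith [(div_lt_one hpc0).2 hpc]
  · simpa using hpc0
  · exact tendsto_atBot_add_const_right _ _
      ((tendsto_Psi_nhdsGT_zero_atBot hγc hσc hE1 hσ0).comp tendsto_one_sub_nhdsLT_one)
  · refine Tendsto.sub_const_div_of_tendsto_atBot _ ?_
      (tendsto_log_nhdsGT_zero.comp tendsto_one_sub_nhdsLT_one)
    simpa only [div_neg, neg_neg] using (tendsto_Psi_one_sub_div_neg_log_one_sub hγc hσc hE1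
      (sub_mg_pos_of_qcrit_pos hσ0 hqc).ne').neg
end

section
/- Let γ, σ² : [0,1] → ℝ be continuous with σ²(u) > 0 for all u ∈ [0,1] (condition (UE)), let Γ(u) := ∫₀^u γ(v) dv, g := ∫₀¹ γ(v) dv, and assume (E1): Γ(u) − g·u > 0 for all u ∈ (0,1). If the rate of return function b(u) := γ(u) + σ²(u)/2 is strictly increasing on [0,1], then b(1) > b(0) > g; in particular the critical diversity index p_c := 2(g − γ(1))/σ²(1) satisfies p_c < 1, and ∫₀¹ b(u) du < b(1) (so the long-term asymptotic growth rate of the equally weighted portfolio, G^{(0)} = ∫₀¹ b(u) du, is strictly smaller than that of the market portfolio, G^{(1)} = b(1)). -/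
open MeasureTheory Set Filter Topology

/-- under (UE) and (E1), if the rate of return b = γ + σ²/2 is strictly
increasing on [0,1], then b(1) > b(0) > g, p_c < 1, and ∫₀¹ b(u) du < b(1), i.e. the
market portfolio outperforms the equally weighted portfolio. -/
theorem stmt17 (γ σ2 : ℝ → ℝ) (hγc : ContinuousOn γ (Set.Icc 0 1))
    (hσc : ContinuousOn σ2 (Set.Icc 0 1)) (hUE : ∀ u ∈ Set.Icc (0:ℝ) 1, 0 < σ2 u)
    (hE1 : ∀ u ∈ Set.Ioo (0:ℝ) 1, 0 < Gam γ u - mg γ * u)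
    (hb : StrictMonoOn (fun u => γ u + σ2 u / 2) (Set.Icc 0 1)) :
    γ 1 + σ2 1 / 2 > γ 0 + σ2 0 / 2 ∧
      γ 0 + σ2 0 / 2 > mg γ ∧
      pcrit γ σ2 < 1 ∧
      (∫ u in (0:ℝ)..1, (γ u + σ2 u / 2)) < γ 1 + σ2 1 / 2 := by
  have h01 : (0:ℝ) ∈ Set.Icc (0:ℝ) 1 := ⟨le_refl 0, zero_le_one⟩
  have h11 : (1:ℝ) ∈ Set.Icc (0:ℝ) 1 := ⟨zero_le_one, le_refl 1⟩
  have h10 : γ 0 + σ2 0 / 2 < γ 1 + σ2 1 / 2 := hb h01 h11 one_pos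
  -- step: γ 0 ≥ g
  have hg0 : mg γ ≤ γ 0 := by
    by_contra h
    push_neg at h
    set ε := (mg γ - γ 0) / 2 with hε
    have hεpos : 0 < ε := by rw [hε]; linarith
    have hcont : ContinuousWithinAt γ (Set.Icc 0 1) 0 := hγc 0 h01
    rw [Metric.continuousWithinAt_iff] at hcont
    obtain ⟨δ, hδpos, hδ⟩ := hcont ε hεpos
    set u := min (δ / 2) (1 / 2) with hu
    have hupos : 0 < u := by positivity
    have hu1 : u < 1 := lt_of_le_of_lt (min_le_right _ _) (by norm_num)
    have huδ : u < δ := lt_of_le_of_lt (min_le_left _ _) (by linarith)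
    have hbound : ∀ v ∈ Set.Icc 0 u, γ v ≤ γ 0 + ε := by
      intro v hv
      have hv1 : v ∈ Set.Icc (0:ℝ) 1 := ⟨hv.1, le_trans hv.2 hu1.le⟩
      have : dist v 0 < δ := by
        rw [Real.dist_eq, sub_zero, abs_of_nonneg hv.1]
        exact lt_of_le_of_lt hv.2 huδ
      have := hδ hv1 this
      rw [Real.dist_eq] at this
      have := abs_lt.mp this
      linarith [this.2]
    have hint : IntervalIntegrable γ volume 0 u := by
      apply ContinuousOn.intervalIntegrable
      apply hγc.mono
      rw [Set.uIcc_of_le hupos.le]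
      exact Set.Icc_subset_Icc le_rfl hu1.le
    have hle : Gam γ u ≤ (γ 0 + ε) * u := by
      have := intervalIntegral.integral_mono_on hupos.le hint
        (intervalIntegrable_const) hbound
      rw [intervalIntegral.integral_const] at this
      simpa [Gam, smul_eq_mul, mul_comm] using this
    have hE := hE1 u ⟨hupos, hu1⟩
    have : γ 0 + ε < mg γ := by
      rw [hε]; linarith
    nlinarith
  have hg : mg γ < γ 0 + σ2 0 / 2 := by
    have := hUE 0 h01
    linarith
  have hgb1 : mg γ < γ 1 + σ2 1 / 2 := lt_trans hg h10
  have hσ1 : 0 < σ2 1 := hUE 1 h11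
  have hpc : pcrit γ σ2 < 1 := by
    rw [pcrit, div_lt_one hσ1]
    linarith
  refine ⟨h10, hg, hpc, ?_⟩
  -- strict integral inequality
  have hbc : ContinuousOn (fun u => γ u + σ2 u / 2) (Set.Icc 0 1) :=
    hγc.add (hσc.div_const 2)
  have key := intervalIntegral.integral_lt_integral_of_continuousOn_of_le_of_exists_lt
    (f := fun u => γ u + σ2 u / 2) (g := fun _ => γ 1 + σ2 1 / 2)
    (a := 0) (b := 1) one_pos hbc continuousOn_const
    (fun x hx => by
      rcases eq_or_lt_of_le hx.2 with h | h
      · simp [h]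
      · exact (hb ⟨hx.1.le, hx.2⟩ h11 h).le)
    ⟨0, h01, h10⟩
  rwa [intervalIntegral.integral_const, smul_eq_mul, sub_zero, one_mul] at key
end

section
/- Fix g > 0 and α > 0, and define the mean-field Atlas growth rate function γ_α(u) := g·(α+1)·(1−u)^α on [0,1]. Then ∫₀¹ γ_α(v) dv = g, the function Γ_α(u) := ∫₀^u γ_α(v) dv satisfies Γ_α(u) − g·u = g·(1−u)·(1 − (1−u)^α) > 0 for all u ∈ (0,1) (condition (E1)), and condition (E2) holds: ∫₀^{1/2} u/(Γ_α(u) − g·u) du + ∫_{1/2}^1 (1−u)/(Γ_α(u) − g·u) du < +∞. -/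
/-!
Integrating, `Γ_α(u) = g (1 - (1 - u)^(α+1))`, so the gap `Γ_α(u) - g u` factors as
`g (1 - u) (1 - (1 - u)^α)`. Bernoulli's inequality (for `α ≤ 1`) or `(1 - u)^α ≤ 1 - u`
(for `α ≥ 1`) gives `1 - (1 - u)^α ≥ min α 1 · u`, so the gap is at least
`g · min α 1 · u (1 - u)`. This vanishes to first order at both ends, exactly like the numerators
`u` near `0` and `1 - u` near `1`, so both integrands of (E2) are bounded.
-/

open MeasureTheory Set Filter Topology

open Real

noncomputable def atlasRate (g α u : ℝ) : ℝ := g * (α + 1) * (1 - u) ^ α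

theorem continuous_Gam {γ : ℝ → ℝ} (hγ : Continuous γ) : Continuous (Gam γ) :=
  intervalIntegral.continuous_primitive (fun _ _ => hγ.intervalIntegrable _ _) 0

theorem integrableOn_Ioo_of_nonneg_of_le {f : ℝ → ℝ} {a b M : ℝ} (hf : Measurable f)
    (hf0 : ∀ u ∈ Ioo a b, 0 ≤ f u) (hfM : ∀ u ∈ Ioo a b, f u ≤ M) :
    IntegrableOn f (Ioo a b) := by
  refine Measure.integrableOn_of_bounded (M := M) (by simp) hf.aestronglyMeasurable ?_
  filter_upwards [ae_restrict_mem measurableSet_Ioo] with u hu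
  rw [Real.norm_of_nonneg (hf0 u hu)]
  exact hfM u hu

theorem min_mul_le_one_sub_one_sub_rpow {α u : ℝ} (hα : 0 ≤ α) (hu0 : 0 ≤ u) (hu1 : u ≤ 1) :
    min α 1 * u ≤ 1 - (1 - u) ^ α := by
  rcases le_total α 1 with h | h
  · have := rpow_one_add_le_one_add_mul_self (s := -u) (by linarith) hα h
    rw [← sub_eq_add_neg] at this
    rw [min_eq_left h]
    linarith
  · have := rpow_le_self_of_le_one (x := 1 - u) (by linarith) (by linarith) h
    rw [min_eq_right h]
    linarith

namespace atlasRate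

variable {g α : ℝ}

theorem continuous (hα : 0 ≤ α) : Continuous (atlasRate g α) := by
  unfold atlasRate
  fun_prop (disch := assumption)

theorem hasDerivAt_primitive (hα : 0 ≤ α) (x : ℝ) :
    HasDerivAt (fun u => g * (1 - (1 - u) ^ (α + 1))) (atlasRate g α x) x := by
  refine (((((hasDerivAt_id' x).const_sub 1).rpow_const (p := α + 1)
    (Or.inr (by linarith))).const_sub 1).const_mul g).congr_deriv ?_
  rw [atlasRate, add_sub_cancel_right]
  ring

theorem Gam_eq (hα : 0 ≤ α) (u : ℝ) :
    Gam (atlasRate g α) u = g * (1 - (1 - u) ^ (α + 1)) := by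
  rw [Gam, intervalIntegral.integral_eq_sub_of_hasDerivAt
    (fun x _ => hasDerivAt_primitive hα x) ((continuous hα).intervalIntegrable 0 u)]
  simp

theorem mg_eq (hα : 0 ≤ α) : mg (atlasRate g α) = g := by
  have := Gam_eq (g := g) hα 1
  rw [sub_self, zero_rpow (by linarith), sub_zero, mul_one] at this
  exact this

theorem Gam_sub_mul_eq (hα : 0 ≤ α) {u : ℝ} (hu : u ≤ 1) :
    Gam (atlasRate g α) u - g * u = g * (1 - u) * (1 - (1 - u) ^ α) := by
  rw [Gam_eq hα, rpow_add_one' (by linarith) (by linarith)]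
  ring

theorem mul_le_Gam_sub_mul (hg : 0 ≤ g) (hα : 0 ≤ α) {u : ℝ} (hu0 : 0 ≤ u) (hu1 : u ≤ 1) :
    g * min α 1 * (u * (1 - u)) ≤ Gam (atlasRate g α) u - g * u := by
  rw [Gam_sub_mul_eq hα hu1]
  have := mul_le_mul_of_nonneg_left (min_mul_le_one_sub_one_sub_rpow hα hu0 hu1)
    (mul_nonneg hg (sub_nonneg.2 hu1))
  linarith

theorem Gam_sub_mul_pos (hg : 0 < g) (hα : 0 < α) {u : ℝ} (hu : u ∈ Ioo 0 1) :
    0 < Gam (atlasRate g α) u - g * u :=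
  have : 0 < g * min α 1 * (u * (1 - u)) :=
    mul_pos (mul_pos hg (lt_min hα one_pos)) (mul_pos hu.1 (sub_pos.2 hu.2))
  this.trans_le (mul_le_Gam_sub_mul hg.le hα.le hu.1.le hu.2.le)

theorem div_Gam_sub_mul_le_of_lt_half (hg : 0 < g) (hα : 0 < α) {u : ℝ}
    (hu : u ∈ Ioo 0 (1 / 2)) :
    u / (Gam (atlasRate g α) u - g * u) ≤ 2 / (g * min α 1) := by
  obtain ⟨hu0, hu1⟩ := hu
  have hc : 0 < g * min α 1 := mul_pos hg (lt_min hα one_pos)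
  calc u / (Gam (atlasRate g α) u - g * u)
      ≤ u / (g * min α 1 * (u * (1 - u))) :=
        div_le_div_of_nonneg_left hu0.le (mul_pos hc (mul_pos hu0 (by linarith)))
          (mul_le_Gam_sub_mul hg.le hα.le hu0.le (by linarith))
    _ = 1 / (g * min α 1 * (1 - u)) := by field_simp
    _ ≤ 2 / (g * min α 1) := by
        rw [div_le_div_iff₀ (mul_pos hc (by linarith)) hc]
        nlinarith

theorem div_Gam_sub_mul_le_of_half_lt (hg : 0 < g) (hα : 0 < α) {u : ℝ}
    (hu : u ∈ Ioo (1 / 2) 1) :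
    (1 - u) / (Gam (atlasRate g α) u - g * u) ≤ 2 / (g * min α 1) := by
  obtain ⟨hu0, hu1⟩ := hu
  have hc : 0 < g * min α 1 := mul_pos hg (lt_min hα one_pos)
  calc (1 - u) / (Gam (atlasRate g α) u - g * u)
      ≤ (1 - u) / (g * min α 1 * (u * (1 - u))) :=
        div_le_div_of_nonneg_left (by linarith) (mul_pos hc (by nlinarith))
          (mul_le_Gam_sub_mul hg.le hα.le (by linarith) hu1.le)
    _ = 1 / (g * min α 1 * u) := by field_simp
    _ ≤ 2 / (g * min α 1) := by
        rw [div_le_div_iff₀ (mul_pos hc (by linarith)) hc]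
        nlinarith

end atlasRate

/-- for g > 0 and α > 0, the mean-field Atlas growth rate
γ_α(u) = g (α+1) (1-u)^α has mean g, satisfies Γ_α(u) - g u = g (1-u)(1-(1-u)^α) > 0
on (0,1) (condition (E1)), and condition (E2) holds. -/
theorem stmt18 (g α : ℝ) (hg : 0 < g) (hα : 0 < α) :
    mg (fun u => g * (α + 1) * (1 - u) ^ α) = g ∧
    (∀ u ∈ Set.Ioo (0:ℝ) 1,
      Gam (fun u => g * (α + 1) * (1 - u) ^ α) u - g * u =
          g * (1 - u) * (1 - (1 - u) ^ α) ∧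
        0 < Gam (fun u => g * (α + 1) * (1 - u) ^ α) u - g * u) ∧
    IntegrableOn
      (fun u => u / (Gam (fun u => g * (α + 1) * (1 - u) ^ α) u - g * u))
      (Set.Ioo 0 (1/2)) ∧
    IntegrableOn
      (fun u => (1 - u) / (Gam (fun u => g * (α + 1) * (1 - u) ^ α) u - g * u))
      (Set.Ioo (1/2) 1) := by
  have hgap : Continuous fun u => Gam (atlasRate g α) u - g * u :=
    (continuous_Gam (atlasRate.continuous hα.le)).sub (continuous_const_mul g)
  have hgap_pos {u : ℝ} (h0 : 0 < u) (h1 : u < 1) := atlasRate.Gam_sub_mul_pos hg hα ⟨h0, h1⟩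
  refine ⟨atlasRate.mg_eq hα.le, fun u hu =>
    ⟨atlasRate.Gam_sub_mul_eq hα.le hu.2.le, hgap_pos hu.1 hu.2⟩, ?_, ?_⟩
  · refine integrableOn_Ioo_of_nonneg_of_le (measurable_id.div hgap.measurable)
      (fun u hu => ?_) (fun u hu => atlasRate.div_Gam_sub_mul_le_of_lt_half hg hα hu)
    exact div_nonneg hu.1.le (hgap_pos hu.1 (by linarith [hu.2])).le
  · refine integrableOn_Ioo_of_nonneg_of_le
      ((measurable_const.sub measurable_id).div hgap.measurable)
      (fun u hu => ?_) (fun u hu => atlasRate.div_Gam_sub_mul_le_of_half_lt hg hα hu)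
    exact div_nonneg (by linarith [hu.2]) (hgap_pos (by linarith [hu.1]) hu.2).le
end
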